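/- arXiv:0705.3671 — 4 statements merged into one kernel-verified Lean document; each statement's English description precedes it below -/
import Mathlib

section
/- Let L > 0, Ω = (0,L) × ℝ, and let φ be a cut-off function as in the context. Then there exist constants α > 0 and β > 0 such that for every k > 0 and every continuously differentiable function v : ℝ² → ℝ with compact support contained in Ω, ∫_Ω φ²(y²/k²) |∇v|² dxdy ≥ α ∫_Ω φ²(y²/k²) v² dxdy − (β/k²) ∫_Ω v² dxdy. (Lemma 2.4 of the paper, a Poincaré-type inequality with cut-off.) -/
open MeasureTheory Real

noncomputable section

/-- Partial derivative in the first (`x`) direction. -/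
def pdx (u : ℝ × ℝ → ℝ) : ℝ × ℝ → ℝ := fun p => fderiv ℝ u p (1, 0)

/-- Partial derivative in the second (`y`) direction. -/
def pdy (u : ℝ × ℝ → ℝ) : ℝ × ℝ → ℝ := fun p => fderiv ℝ u p (0, 1)

/-- Squared length of the spatial gradient: `|∇u|² = (∂ₓu)² + (∂ᵧu)²`. -/
def gradSq (u : ℝ × ℝ → ℝ) : ℝ × ℝ → ℝ := fun p => (pdx u p) ^ 2 + (pdy u p) ^ 2

/-- The Laplacian `Δu = ∂ₓₓu + ∂ᵧᵧu`. -/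
def lap (u : ℝ × ℝ → ℝ) : ℝ × ℝ → ℝ := fun p => pdx (pdx u) p + pdy (pdy u) p

/-- The Jacobian (Poisson bracket) `J(u,v) = (∂ᵧu)(∂ₓv) − (∂ₓu)(∂ᵧv)`. -/
def jac (u v : ℝ × ℝ → ℝ) : ℝ × ℝ → ℝ := fun p => pdy u p * pdx v p - pdx u p * pdy v p

/-- `L²` norm over `ℝ²`. -/
def L2norm (u : ℝ × ℝ → ℝ) : ℝ := Real.sqrt (∫ p : ℝ × ℝ, (u p) ^ 2)

/-- `L²` norm of the gradient: `‖∇u‖_{L²}`. -/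
def gradL2 (u : ℝ × ℝ → ℝ) : ℝ := Real.sqrt (∫ p : ℝ × ℝ, gradSq u p)

/-- Sobolev norm `‖u‖_{H^m}`, the square root of the sum of the squared `L²` norms of all
partial derivatives `∂ₓ^i ∂ᵧ^j u` with `i + j ≤ m`. -/
def Hnorm (m : ℕ) (u : ℝ × ℝ → ℝ) : ℝ :=
  Real.sqrt (∑ i ∈ Finset.range (m + 1), ∑ j ∈ Finset.range (m + 1 - i),
    ∫ p : ℝ × ℝ, (pdx^[i] (pdy^[j] u) p) ^ 2)

/-- The two-dimensional channel `Ω = (0, L) × ℝ`. -/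
def channel (L : ℝ) : Set (ℝ × ℝ) := Set.Ioo 0 L ×ˢ (Set.univ : Set ℝ)

/-- A smooth cut-off function: `0 ≤ φ ≤ 1`, `φ(s) = 0` for `|s| ≤ 1`, `φ(s) = 1` for `|s| ≥ 2`. -/
def IsCutoff (φ : ℝ → ℝ) : Prop :=
  ContDiff ℝ (⊤ : ℕ∞) φ ∧ (∀ s, 0 ≤ φ s ∧ φ s ≤ 1) ∧
    (∀ s, |s| ≤ 1 → φ s = 0) ∧ (∀ s, 2 ≤ |s| → φ s = 1)

/-- A function continuous and vanishing outside `Ioo 0 L` is integrable. -/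
lemma integ1D {L : ℝ} {f : ℝ → ℝ} (hf : Continuous f)
    (h0 : ∀ x, x ∉ Set.Ioo 0 L → f x = 0) : Integrable f := by
  refine hf.integrable_of_hasCompactSupport
    (HasCompactSupport.intro (isCompact_Icc (a := (0:ℝ)) (b := L)) ?_)
  intro x hx
  exact h0 x (fun hx' => hx ⟨hx'.1.le, hx'.2.le⟩)

/-- 1D Poincaré inequality for functions supported in `(0, L)`. -/
lemma oneD {L : ℝ} (hL : 0 < L) (g g' : ℝ → ℝ)
    (hd : ∀ x, HasDerivAt g (g' x) x) (hc' : Continuous g')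
    (h0 : ∀ x, x ∉ Set.Ioo 0 L → g x = 0)
    (h0' : ∀ x, x ∉ Set.Ioo 0 L → g' x = 0) :
    ∫ x, (g x) ^ 2 ≤ 4 * L ^ 2 * ∫ x, (g' x) ^ 2 := by
  have hdg : Differentiable ℝ g := fun x => (hd x).differentiableAt
  have hcg : Continuous g := hdg.continuous
  set ε : ℝ := 1 / (2 * L) with hε
  have hεpos : 0 < ε := by positivity
  have hg2 : ∫ x, (g x) ^ 2 = ∫ x in Set.Ioo 0 L, (g x) ^ 2 :=
    (setIntegral_eq_integral_of_forall_compl_eq_zero (fun x hx => by rw [h0 x hx]; ring)).symm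
  have hg'2 : ∫ x, (g' x) ^ 2 = ∫ x in Set.Ioo 0 L, (g' x) ^ 2 :=
    (setIntegral_eq_integral_of_forall_compl_eq_zero (fun x hx => by rw [h0' x hx]; ring)).symm
  set A := ∫ x in Set.Ioo 0 L, (g x) ^ 2 with hA
  set B := ∫ x in Set.Ioo 0 L, (g' x) ^ 2 with hB
  set m : ℝ → ℝ := fun t => ε * g t ^ 2 + g' t ^ 2 / ε with hm
  have hcm : Continuous m := by fun_prop
  have hmnn : ∀ t, 0 ≤ m t := fun t => by positivity
  set M := ∫ t in Set.Ioo 0 L, m t with hM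
  have hintmL : IntervalIntegrable m volume 0 L := hcm.intervalIntegrable _ _
  have hML : ∫ t in (0:ℝ)..L, m t = M := by
    rw [intervalIntegral.integral_of_le hL.le, integral_Ioc_eq_integral_Ioo]
  -- pointwise bound
  have key : ∀ x ∈ Set.Ioo 0 L, (g x) ^ 2 ≤ M := by
    intro x hx
    have h2 : ∀ t, HasDerivAt (fun t => g t ^ 2) (2 * g t * g' t) t := by
      intro t
      simpa [mul_comm, mul_assoc] using (hd t).fun_pow 2
    have hint : IntervalIntegrable (fun t => 2 * g t * g' t) volume 0 x :=
      (by fun_prop : Continuous fun t => 2 * g t * g' t).intervalIntegrable _ _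
    have hftc : ∫ t in (0:ℝ)..x, 2 * g t * g' t = g x ^ 2 - g 0 ^ 2 :=
      intervalIntegral.integral_eq_sub_of_hasDerivAt (fun t _ => h2 t) hint
    have hg0 : g 0 = 0 := h0 0 (by simp)
    have hpt : ∀ t, 2 * g t * g' t ≤ m t := by
      intro t
      have hb : g' t ^ 2 / ε * ε = g' t ^ 2 := div_mul_cancel₀ _ (ne_of_gt hεpos)
      simp only [hm]
      nlinarith [sq_nonneg (ε * g t - g' t), hεpos, hb, sq_nonneg (g' t)]
    have hintm : IntervalIntegrable m volume 0 x := hcm.intervalIntegrable _ _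
    have h1 : g x ^ 2 ≤ ∫ t in (0:ℝ)..x, m t := by
      have he : g x ^ 2 = ∫ t in (0:ℝ)..x, 2 * g t * g' t := by rw [hftc, hg0]; ring
      rw [he]
      exact intervalIntegral.integral_mono hx.1.le hint hintm hpt
    refine h1.trans ?_
    rw [← hML]
    exact intervalIntegral.integral_mono_interval le_rfl hx.1.le hx.2.le
      (Filter.Eventually.of_forall hmnn) hintmL
  -- integrate the pointwise bound
  have hiA : IntegrableOn (fun x => g x ^ 2) (Set.Ioo 0 L) :=
    (integ1D (hcg.pow 2) (fun x hx => by rw [Pi.pow_apply, h0 x hx]; ring)).integrableOn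
  have hiB : IntegrableOn (fun x => g' x ^ 2) (Set.Ioo 0 L) :=
    (integ1D (hc'.pow 2) (fun x hx => by rw [Pi.pow_apply, h0' x hx]; ring)).integrableOn
  have hvol : (volume (Set.Ioo (0:ℝ) L)) < ⊤ := by
    rw [Real.volume_Ioo]; exact ENNReal.ofReal_lt_top
  have hconst : IntegrableOn (fun _ : ℝ => M) (Set.Ioo 0 L) :=
    integrableOn_const hvol.ne
  have hALM : A ≤ L * M := by
    have h1 : A ≤ ∫ _ in Set.Ioo (0:ℝ) L, M :=
      setIntegral_mono_on hiA hconst measurableSet_Ioo key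
    have h2 : ∫ _ in Set.Ioo (0:ℝ) L, M = L * M := by
      rw [setIntegral_const, measureReal_def, Real.volume_Ioo, ENNReal.toReal_ofReal (by linarith), sub_zero,
        smul_eq_mul]
    linarith [h1, h2.le, h2.ge]
  have hMsplit : M = ε * A + B / ε := by
    rw [hM, hA, hB]
    rw [integral_add (hiA.const_mul ε) (hiB.div_const ε), integral_const_mul, integral_div]
  have hL' : L ≠ 0 := ne_of_gt hL
  have h5 : L * (ε * A + B / ε) = A / 2 + 2 * L ^ 2 * B := by
    rw [hε]; field_simp
  have hfin : A ≤ 4 * L ^ 2 * B := by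
    rw [hMsplit] at hALM
    rw [h5] at hALM
    linarith
  rw [hg2, hg'2]
  exact hfin

/-- Lemma 2.4: a Poincaré-type inequality with cut-off on the channel. -/
theorem stmt5 (L : ℝ) (hL : 0 < L) (φ : ℝ → ℝ) (hφ : IsCutoff φ) :
    ∃ α > (0 : ℝ), ∃ β > (0 : ℝ), ∀ k > (0 : ℝ), ∀ v : ℝ × ℝ → ℝ,
      ContDiff ℝ 1 v → HasCompactSupport v → tsupport v ⊆ channel L →
        α * (∫ p in channel L, (φ (p.2 ^ 2 / k ^ 2)) ^ 2 * (v p) ^ 2)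
            - (β / k ^ 2) * (∫ p in channel L, (v p) ^ 2)
          ≤ ∫ p in channel L, (φ (p.2 ^ 2 / k ^ 2)) ^ 2 * gradSq v p := by
  obtain ⟨hφs, hφb, hφ0, hφ1⟩ := hφ
  refine ⟨1 / (4 * L ^ 2), by positivity, 1, one_pos, ?_⟩
  intro k hk v hv hvc hsupp
  have hms : MeasurableSet (channel L) := measurableSet_Ioo.prod MeasurableSet.univ
  have hB0 : 0 ≤ ∫ p in channel L, (v p) ^ 2 :=
    setIntegral_nonneg hms (fun p _ => sq_nonneg _)
  have hβ : 0 ≤ ((1:ℝ) / k ^ 2) * ∫ p in channel L, (v p) ^ 2 := by positivity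
  have hmain : (1 / (4 * L ^ 2)) * (∫ p in channel L, (φ (p.2 ^ 2 / k ^ 2)) ^ 2 * (v p) ^ 2)
      ≤ ∫ p in channel L, (φ (p.2 ^ 2 / k ^ 2)) ^ 2 * gradSq v p := by
    -- notation
    set w : ℝ → ℝ := fun y => (φ (y ^ 2 / k ^ 2)) ^ 2 with hw
    have hwc : Continuous w := by
      have hc := hφs.continuous
      fun_prop
    have hwnn : ∀ y, 0 ≤ w y := fun y => sq_nonneg _
    have hvcont : Continuous v := hv.continuous
    have hfd : Continuous fun p => fderiv ℝ v p := hv.continuous_fderiv one_ne_zero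
    have hpdxc : Continuous (pdx v) := hfd.clm_apply continuous_const
    have hpdyc : Continuous (pdy v) := hfd.clm_apply continuous_const
    have hgsc : Continuous (gradSq v) := (hpdxc.pow 2).add (hpdyc.pow 2)
    have hvan : ∀ p, p ∉ tsupport v → v p = 0 := fun p hp =>
      image_eq_zero_of_notMem_tsupport hp
    have hvan' : ∀ p, p ∉ tsupport v → fderiv ℝ v p = 0 := fun p hp =>
      Function.notMem_support.1 (fun hmem => hp (support_fderiv_subset ℝ hmem))
    -- the three integrands
    set f1 : ℝ × ℝ → ℝ := fun p => w p.2 * (v p) ^ 2 with hf1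
    set f2 : ℝ × ℝ → ℝ := fun p => w p.2 * (pdx v p) ^ 2 with hf2
    set f3 : ℝ × ℝ → ℝ := fun p => w p.2 * gradSq v p with hf3
    have hz1 : ∀ p, p ∉ tsupport v → f1 p = 0 := fun p hp => by
      simp [hf1, hvan p hp]
    have hz2 : ∀ p, p ∉ tsupport v → f2 p = 0 := fun p hp => by
      simp [hf2, pdx, hvan' p hp]
    have hz3 : ∀ p, p ∉ tsupport v → f3 p = 0 := fun p hp => by
      simp [hf3, gradSq, pdx, pdy, hvan' p hp]
    have hch : ∀ p, p ∉ channel L → p ∉ tsupport v := fun p hp hmem => hp (hsupp hmem)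
    have hi1 : Integrable f1 :=
      ((hwc.comp continuous_snd).mul (hvcont.pow 2)).integrable_of_hasCompactSupport
        (HasCompactSupport.intro hvc hz1)
    have hi2 : Integrable f2 :=
      ((hwc.comp continuous_snd).mul (hpdxc.pow 2)).integrable_of_hasCompactSupport
        (HasCompactSupport.intro hvc hz2)
    have hi3 : Integrable f3 :=
      ((hwc.comp continuous_snd).mul hgsc).integrable_of_hasCompactSupport
        (HasCompactSupport.intro hvc hz3)
    -- replace set integrals by full integrals
    have e1 : ∫ p in channel L, (φ (p.2 ^ 2 / k ^ 2)) ^ 2 * (v p) ^ 2 = ∫ p, f1 p :=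
      setIntegral_eq_integral_of_forall_compl_eq_zero (fun p hp => hz1 p (hch p hp))
    have e3 : ∫ p in channel L, (φ (p.2 ^ 2 / k ^ 2)) ^ 2 * gradSq v p = ∫ p, f3 p :=
      setIntegral_eq_integral_of_forall_compl_eq_zero (fun p hp => hz3 p (hch p hp))
    rw [e1, e3]
    -- f2 ≤ f3 pointwise
    have h23 : ∫ p, f2 p ≤ ∫ p, f3 p := by
      refine integral_mono hi2 hi3 (fun p => ?_)
      simp only [hf2, hf3, gradSq]
      exact mul_le_mul_of_nonneg_left (le_add_of_nonneg_right (sq_nonneg _)) (hwnn p.2)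
    -- Fubini
    have hi1' : Integrable f1 (volume.prod volume) := by rwa [← Measure.volume_eq_prod]
    have hi2' : Integrable f2 (volume.prod volume) := by rwa [← Measure.volume_eq_prod]
    have hF1 : ∫ p, f1 p = ∫ y, ∫ x, f1 (x, y) := by
      rw [Measure.volume_eq_prod]; exact integral_prod_symm f1 hi1'
    have hF2 : ∫ p, f2 p = ∫ y, ∫ x, f2 (x, y) := by
      rw [Measure.volume_eq_prod]; exact integral_prod_symm f2 hi2'
    -- slice inequality
    have hslice : ∀ y : ℝ, (1 / (4 * L ^ 2)) * ∫ x, f1 (x, y) ≤ ∫ x, f2 (x, y) := by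
      intro y
      have hgy : ∀ x : ℝ, HasDerivAt (fun x => v (x, y)) (pdx v (x, y)) x := by
        intro x
        exact ((hv.differentiable one_ne_zero) (x, y)).hasFDerivAt.comp_hasDerivAt x
          ((hasDerivAt_id x).prodMk (hasDerivAt_const x y))
      have hvy0 : ∀ x, x ∉ Set.Ioo 0 L → v (x, y) = 0 := fun x hx =>
        hvan _ (fun hmem => hx (hsupp hmem).1)
      have hdy0 : ∀ x, x ∉ Set.Ioo 0 L → pdx v (x, y) = 0 := by
        intro x hx
        have : fderiv ℝ v (x, y) = 0 := hvan' _ (fun hmem => hx (hsupp hmem).1)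
        simp [pdx, this]
      have hpc : Continuous fun x : ℝ => pdx v (x, y) :=
        hpdxc.comp (continuous_id.prodMk continuous_const)
      have h1d := oneD hL (fun x => v (x, y)) (fun x => pdx v (x, y)) hgy hpc hvy0 hdy0
      have eI1 : ∫ x, f1 (x, y) = w y * ∫ x, (v (x, y)) ^ 2 := by
        simp only [hf1]; exact integral_const_mul _ _
      have eI2 : ∫ x, f2 (x, y) = w y * ∫ x, (pdx v (x, y)) ^ 2 := by
        simp only [hf2]; exact integral_const_mul _ _
      rw [eI1, eI2]
      have hL2 : (0:ℝ) < 4 * L ^ 2 := by positivity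
      have hmul := mul_le_mul_of_nonneg_left h1d (hwnn y)
      calc 1 / (4 * L ^ 2) * (w y * ∫ x, (v (x, y)) ^ 2)
          ≤ 1 / (4 * L ^ 2) * (w y * (4 * L ^ 2 * ∫ x, (pdx v (x, y)) ^ 2)) := by
            exact mul_le_mul_of_nonneg_left hmul (by positivity)
        _ = w y * ∫ x, (pdx v (x, y)) ^ 2 := by field_simp
    -- integrate over y
    have hiF1 : Integrable fun y => ∫ x, f1 (x, y) := hi1'.integral_prod_right
    have hiF2 : Integrable fun y => ∫ x, f2 (x, y) := hi2'.integral_prod_right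
    calc (1 / (4 * L ^ 2)) * ∫ p, f1 p
        = ∫ y, (1 / (4 * L ^ 2)) * ∫ x, f1 (x, y) := by rw [hF1, integral_const_mul]
      _ ≤ ∫ y, ∫ x, f2 (x, y) := integral_mono (hiF1.const_mul _) hiF2 hslice
      _ = ∫ p, f2 p := hF2.symm
      _ ≤ ∫ p, f3 p := h23
  linarith
end
end

section
/- Let φ be a cut-off function as in the context and let k > 0. For every twice continuously differentiable function Ψ : ℝ² → ℝ and every continuously differentiable function θ : ℝ² → ℝ with compact support, ∫_{ℝ²} J(Ψ,θ) θ φ²(y²/k²) dxdy = 2 ∫_{ℝ²} (∂_x Ψ) θ² φ'(y²/k²) φ(y²/k²) (y/k²) dxdy. (Identity (45a) of the paper.) -/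
open MeasureTheory Real

noncomputable section

lemma my_integral_pdx_eq_zero (f : ℝ × ℝ → ℝ) (hf : ContDiff ℝ 1 f)
    (hsupp : HasCompactSupport f) : ∫ p : ℝ × ℝ, pdx f p = 0 := by
  have hcont : Continuous (pdx f) :=
    (ContinuousLinearMap.apply ℝ ℝ ((1:ℝ), (0:ℝ))).continuous.comp (hf.continuous_fderiv one_ne_zero)
  have hcs : HasCompactSupport (pdx f) := hsupp.fderiv_apply ℝ ((1:ℝ), (0:ℝ))
  have hint : Integrable (pdx f) := hcont.integrable_of_hasCompactSupport hcs
  have h1 : ∫ p : ℝ × ℝ, pdx f p = ∫ y : ℝ, ∫ x : ℝ, pdx f (x, y) := by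
    rw [Measure.volume_eq_prod]
    exact integral_prod_symm _ (by rwa [← Measure.volume_eq_prod])
  rw [h1]
  have inner0 : ∀ y : ℝ, ∫ x : ℝ, pdx f (x, y) = 0 := by
    intro y
    have hgc : ContDiff ℝ 1 (fun x : ℝ => f (x, y)) :=
      hf.comp (contDiff_id.prodMk contDiff_const)
    have hgs : HasCompactSupport (fun x : ℝ => f (x, y)) := by
      apply HasCompactSupport.intro (hsupp.image continuous_fst)
      intro x hx
      by_contra hne
      exact hx ⟨(x, y), subset_tsupport _ hne, rfl⟩
    have hderiv : ∀ x : ℝ, HasDerivAt (fun x : ℝ => f (x, y)) (pdx f (x, y)) x := fun x =>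
      (hf.differentiable one_ne_zero (x, y)).hasFDerivAt.comp_hasDerivAt x
        ((hasDerivAt_id x).prodMk (hasDerivAt_const x y))
    have hdg : (deriv fun x : ℝ => f (x, y)) = fun x => pdx f (x, y) :=
      funext fun x => (hderiv x).deriv
    have hint1 : Integrable (deriv fun x : ℝ => f (x, y)) :=
      (hgc.continuous_deriv le_rfl).integrable_of_hasCompactSupport hgs.deriv
    calc ∫ x : ℝ, pdx f (x, y) = ∫ x : ℝ, deriv (fun x : ℝ => f (x, y)) x := by rw [hdg]
      _ = (∫ x in Set.Iic 0, deriv (fun x : ℝ => f (x, y)) x)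
            + ∫ x in Set.Ioi 0, deriv (fun x : ℝ => f (x, y)) x :=
          (intervalIntegral.integral_Iic_add_Ioi hint1.integrableOn hint1.integrableOn).symm
      _ = f (0, y) + - f (0, y) := by
          rw [HasCompactSupport.integral_Iic_deriv_eq hgc hgs 0,
            HasCompactSupport.integral_Ioi_deriv_eq hgc hgs 0]
      _ = 0 := by ring
  simp [inner0]

lemma my_integral_pdy_eq_zero (f : ℝ × ℝ → ℝ) (hf : ContDiff ℝ 1 f)
    (hsupp : HasCompactSupport f) : ∫ p : ℝ × ℝ, pdy f p = 0 := by
  have hcont : Continuous (pdy f) :=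
    (ContinuousLinearMap.apply ℝ ℝ ((0:ℝ), (1:ℝ))).continuous.comp (hf.continuous_fderiv one_ne_zero)
  have hcs : HasCompactSupport (pdy f) := hsupp.fderiv_apply ℝ ((0:ℝ), (1:ℝ))
  have hint : Integrable (pdy f) := hcont.integrable_of_hasCompactSupport hcs
  have h1 : ∫ p : ℝ × ℝ, pdy f p = ∫ x : ℝ, ∫ y : ℝ, pdy f (x, y) := by
    rw [Measure.volume_eq_prod]
    exact integral_prod _ (by rwa [← Measure.volume_eq_prod])
  rw [h1]
  have inner0 : ∀ x : ℝ, ∫ y : ℝ, pdy f (x, y) = 0 := by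
    intro x
    have hgc : ContDiff ℝ 1 (fun y : ℝ => f (x, y)) :=
      hf.comp (contDiff_const.prodMk contDiff_id)
    have hgs : HasCompactSupport (fun y : ℝ => f (x, y)) := by
      apply HasCompactSupport.intro (hsupp.image continuous_snd)
      intro y hy
      by_contra hne
      exact hy ⟨(x, y), subset_tsupport _ hne, rfl⟩
    have hderiv : ∀ y : ℝ, HasDerivAt (fun y : ℝ => f (x, y)) (pdy f (x, y)) y := fun y =>
      (hf.differentiable one_ne_zero (x, y)).hasFDerivAt.comp_hasDerivAt y
        ((hasDerivAt_const y x).prodMk (hasDerivAt_id y))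
    have hdg : (deriv fun y : ℝ => f (x, y)) = fun y => pdy f (x, y) :=
      funext fun y => (hderiv y).deriv
    have hint1 : Integrable (deriv fun y : ℝ => f (x, y)) :=
      (hgc.continuous_deriv le_rfl).integrable_of_hasCompactSupport hgs.deriv
    calc ∫ y : ℝ, pdy f (x, y) = ∫ y : ℝ, deriv (fun y : ℝ => f (x, y)) y := by rw [hdg]
      _ = (∫ y in Set.Iic 0, deriv (fun y : ℝ => f (x, y)) y)
            + ∫ y in Set.Ioi 0, deriv (fun y : ℝ => f (x, y)) y :=
          (intervalIntegral.integral_Iic_add_Ioi hint1.integrableOn hint1.integrableOn).symm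
      _ = f (x, 0) + - f (x, 0) := by
          rw [HasCompactSupport.integral_Iic_deriv_eq hgc hgs 0,
            HasCompactSupport.integral_Ioi_deriv_eq hgc hgs 0]
      _ = 0 := by ring
  simp [inner0]

lemma my_clairaut {Ψ : ℝ × ℝ → ℝ} (hΨ : ContDiff ℝ 2 Ψ) (p : ℝ × ℝ) :
    fderiv ℝ (fun q => fderiv ℝ Ψ q (0, 1)) p (1, 0)
      = fderiv ℝ (fun q => fderiv ℝ Ψ q (1, 0)) p (0, 1) := by
  have hd1 : Differentiable ℝ (fderiv ℝ Ψ) :=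
    (hΨ.fderiv_right (m := 1) (by norm_num)).differentiable one_ne_zero
  have hsym : ∀ v w : ℝ × ℝ,
      fderiv ℝ (fderiv ℝ Ψ) p v w = fderiv ℝ (fderiv ℝ Ψ) p w v :=
    hΨ.contDiffAt.isSymmSndFDerivAt (by norm_num)
  have e1 : ∀ v w : ℝ × ℝ,
      fderiv ℝ (fun q => fderiv ℝ Ψ q v) p w = fderiv ℝ (fderiv ℝ Ψ) p w v := by
    intro v w
    have h2 : HasFDerivAt (fun q => fderiv ℝ Ψ q v)
        ((ContinuousLinearMap.apply ℝ ℝ v).comp (fderiv ℝ (fderiv ℝ Ψ) p)) p :=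
      (ContinuousLinearMap.apply ℝ ℝ v).hasFDerivAt.comp p (hd1 p).hasFDerivAt
    rw [h2.fderiv]; rfl
  rw [e1, e1]
  exact hsym (1, 0) (0, 1)

lemma my_key (φ : ℝ → ℝ) (hφC : ContDiff ℝ (⊤ : ℕ∞) φ) (k : ℝ) (Ψ θ : ℝ × ℝ → ℝ)
    (hΨ : ContDiff ℝ 2 Ψ) (hθ : ContDiff ℝ 1 θ) (p : ℝ × ℝ) :
    pdx (fun q => fderiv ℝ Ψ q (0, 1) * (θ q * θ q) * (φ (q.2 ^ 2 / k ^ 2) * φ (q.2 ^ 2 / k ^ 2))) p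
      - pdy (fun q => fderiv ℝ Ψ q (1, 0) * (θ q * θ q) * (φ (q.2 ^ 2 / k ^ 2) * φ (q.2 ^ 2 / k ^ 2))) p
    = 2 * (jac Ψ θ p * θ p * (φ (p.2 ^ 2 / k ^ 2)) ^ 2)
      - 4 * (fderiv ℝ Ψ p (1, 0) * (θ p) ^ 2 * deriv φ (p.2 ^ 2 / k ^ 2) * φ (p.2 ^ 2 / k ^ 2)
          * (p.2 / k ^ 2)) := by
  simp only [pdx, pdy, jac]
  have hfd : ContDiff ℝ 1 (fderiv ℝ Ψ) := hΨ.fderiv_right (by norm_num)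
  have hpdxC : ContDiff ℝ 1 (fun q => fderiv ℝ Ψ q (1, 0)) :=
    (ContinuousLinearMap.apply ℝ ℝ ((1:ℝ), (0:ℝ))).contDiff.comp hfd
  have hpdyC : ContDiff ℝ 1 (fun q => fderiv ℝ Ψ q (0, 1)) :=
    (ContinuousLinearMap.apply ℝ ℝ ((0:ℝ), (1:ℝ))).contDiff.comp hfd
  -- derivative of the cutoff profile
  have hsd : HasDerivAt (fun y : ℝ => y ^ 2 / k ^ 2) (2 * p.2 / k ^ 2) p.2 := by
    simpa using (hasDerivAt_pow 2 p.2).div_const (k ^ 2)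
  have hφd : HasDerivAt (fun y : ℝ => φ (y ^ 2 / k ^ 2))
      (deriv φ (p.2 ^ 2 / k ^ 2) * (2 * p.2 / k ^ 2)) p.2 :=
    ((hφC.differentiable (by simp) _).hasDerivAt).comp p.2 hsd
  have hCd : HasDerivAt (fun y : ℝ => φ (y ^ 2 / k ^ 2) * φ (y ^ 2 / k ^ 2))
      (deriv φ (p.2 ^ 2 / k ^ 2) * (2 * p.2 / k ^ 2) * φ (p.2 ^ 2 / k ^ 2)
        + φ (p.2 ^ 2 / k ^ 2) * (deriv φ (p.2 ^ 2 / k ^ 2) * (2 * p.2 / k ^ 2))) p.2 :=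
    hφd.mul hφd
  have hCs : HasFDerivAt (fun q : ℝ × ℝ => φ (q.2 ^ 2 / k ^ 2) * φ (q.2 ^ 2 / k ^ 2))
      ((deriv φ (p.2 ^ 2 / k ^ 2) * (2 * p.2 / k ^ 2) * φ (p.2 ^ 2 / k ^ 2)
        + φ (p.2 ^ 2 / k ^ 2) * (deriv φ (p.2 ^ 2 / k ^ 2) * (2 * p.2 / k ^ 2)))
        • ContinuousLinearMap.snd ℝ ℝ ℝ) p :=
    hCd.comp_hasFDerivAt p hasFDerivAt_snd
  have hθd : HasFDerivAt θ (fderiv ℝ θ p) p := (hθ.differentiable one_ne_zero p).hasFDerivAt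
  have hθθ : HasFDerivAt (fun q => θ q * θ q)
      (θ p • fderiv ℝ θ p + θ p • fderiv ℝ θ p) p := hθd.mul hθd
  have hyd : HasFDerivAt (fun q => fderiv ℝ Ψ q (0, 1)) (fderiv ℝ (fun q => fderiv ℝ Ψ q (0, 1)) p) p :=
    (hpdyC.differentiable one_ne_zero p).hasFDerivAt
  have hxd : HasFDerivAt (fun q => fderiv ℝ Ψ q (1, 0)) (fderiv ℝ (fun q => fderiv ℝ Ψ q (1, 0)) p) p :=
    (hpdxC.differentiable one_ne_zero p).hasFDerivAt
  have hA : HasFDerivAt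
      (fun q => fderiv ℝ Ψ q (0, 1) * (θ q * θ q) * (φ (q.2 ^ 2 / k ^ 2) * φ (q.2 ^ 2 / k ^ 2)))
      ((fderiv ℝ Ψ p (0, 1) * (θ p * θ p)) •
          ((deriv φ (p.2 ^ 2 / k ^ 2) * (2 * p.2 / k ^ 2) * φ (p.2 ^ 2 / k ^ 2)
            + φ (p.2 ^ 2 / k ^ 2) * (deriv φ (p.2 ^ 2 / k ^ 2) * (2 * p.2 / k ^ 2)))
            • ContinuousLinearMap.snd ℝ ℝ ℝ)
        + (φ (p.2 ^ 2 / k ^ 2) * φ (p.2 ^ 2 / k ^ 2)) •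
          (fderiv ℝ Ψ p (0, 1) • (θ p • fderiv ℝ θ p + θ p • fderiv ℝ θ p)
            + (θ p * θ p) • fderiv ℝ (fun q => fderiv ℝ Ψ q (0, 1)) p)) p :=
    (hyd.mul hθθ).mul hCs
  have hB : HasFDerivAt
      (fun q => fderiv ℝ Ψ q (1, 0) * (θ q * θ q) * (φ (q.2 ^ 2 / k ^ 2) * φ (q.2 ^ 2 / k ^ 2)))
      ((fderiv ℝ Ψ p (1, 0) * (θ p * θ p)) •
          ((deriv φ (p.2 ^ 2 / k ^ 2) * (2 * p.2 / k ^ 2) * φ (p.2 ^ 2 / k ^ 2)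
            + φ (p.2 ^ 2 / k ^ 2) * (deriv φ (p.2 ^ 2 / k ^ 2) * (2 * p.2 / k ^ 2)))
            • ContinuousLinearMap.snd ℝ ℝ ℝ)
        + (φ (p.2 ^ 2 / k ^ 2) * φ (p.2 ^ 2 / k ^ 2)) •
          (fderiv ℝ Ψ p (1, 0) • (θ p • fderiv ℝ θ p + θ p • fderiv ℝ θ p)
            + (θ p * θ p) • fderiv ℝ (fun q => fderiv ℝ Ψ q (1, 0)) p)) p :=
    (hxd.mul hθθ).mul hCs
  have hcl := my_clairaut hΨ p
  rw [hA.fderiv, hB.fderiv]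
  simp only [ContinuousLinearMap.add_apply, ContinuousLinearMap.smul_apply,
    ContinuousLinearMap.coe_snd', smul_eq_mul]
  norm_num
  rw [hcl]
  ring

/-- Identity (45a):
`∫ J(Ψ,θ) θ φ²(y²/k²) = 2 ∫ (∂ₓΨ) θ² φ'(y²/k²) φ(y²/k²) (y/k²)`. -/
theorem stmt6 (φ : ℝ → ℝ) (hφ : IsCutoff φ) (k : ℝ) (hk : 0 < k)
    (Ψ θ : ℝ × ℝ → ℝ) (hΨ : ContDiff ℝ 2 Ψ)
    (hθ : ContDiff ℝ 1 θ) (hθsupp : HasCompactSupport θ) :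
    (∫ p : ℝ × ℝ, jac Ψ θ p * θ p * (φ (p.2 ^ 2 / k ^ 2)) ^ 2)
      = 2 * ∫ p : ℝ × ℝ, pdx Ψ p * (θ p) ^ 2 * deriv φ (p.2 ^ 2 / k ^ 2)
          * φ (p.2 ^ 2 / k ^ 2) * (p.2 / k ^ 2) := by
  obtain ⟨hφC, -, -, -⟩ := hφ
  have hfdΨ : ContDiff ℝ 1 (fderiv ℝ Ψ) := hΨ.fderiv_right (by norm_num)
  have hpdxC : ContDiff ℝ 1 (fun q : ℝ × ℝ => fderiv ℝ Ψ q (1, 0)) :=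
    (ContinuousLinearMap.apply ℝ ℝ ((1:ℝ), (0:ℝ))).contDiff.comp hfdΨ
  have hpdyC : ContDiff ℝ 1 (fun q : ℝ × ℝ => fderiv ℝ Ψ q (0, 1)) :=
    (ContinuousLinearMap.apply ℝ ℝ ((0:ℝ), (1:ℝ))).contDiff.comp hfdΨ
  have hsC : ContDiff ℝ (⊤ : ℕ∞) (fun y : ℝ => y ^ 2 / k ^ 2) := (contDiff_id.pow 2).div_const _
  have hφs : ContDiff ℝ (⊤ : ℕ∞) (fun y : ℝ => φ (y ^ 2 / k ^ 2)) := hφC.comp hsC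
  have hCsnd : ContDiff ℝ 1 (fun q : ℝ × ℝ => φ (q.2 ^ 2 / k ^ 2) * φ (q.2 ^ 2 / k ^ 2)) :=
    ((hφs.mul hφs).comp contDiff_snd).of_le (by simp)
  have hA : ContDiff ℝ 1 (fun q : ℝ × ℝ =>
      fderiv ℝ Ψ q (0, 1) * (θ q * θ q) * (φ (q.2 ^ 2 / k ^ 2) * φ (q.2 ^ 2 / k ^ 2))) :=
    (hpdyC.mul (hθ.mul hθ)).mul hCsnd
  have hB : ContDiff ℝ 1 (fun q : ℝ × ℝ =>
      fderiv ℝ Ψ q (1, 0) * (θ q * θ q) * (φ (q.2 ^ 2 / k ^ 2) * φ (q.2 ^ 2 / k ^ 2))) :=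
    (hpdxC.mul (hθ.mul hθ)).mul hCsnd
  have hAsupp : HasCompactSupport (fun q : ℝ × ℝ =>
      fderiv ℝ Ψ q (0, 1) * (θ q * θ q) * (φ (q.2 ^ 2 / k ^ 2) * φ (q.2 ^ 2 / k ^ 2))) := by
    apply HasCompactSupport.intro hθsupp
    intro q hq
    simp [image_eq_zero_of_notMem_tsupport hq]
  have hBsupp : HasCompactSupport (fun q : ℝ × ℝ =>
      fderiv ℝ Ψ q (1, 0) * (θ q * θ q) * (φ (q.2 ^ 2 / k ^ 2) * φ (q.2 ^ 2 / k ^ 2))) := by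
    apply HasCompactSupport.intro hθsupp
    intro q hq
    simp [image_eq_zero_of_notMem_tsupport hq]
  have hIA := my_integral_pdx_eq_zero _ hA hAsupp
  have hIB := my_integral_pdy_eq_zero _ hB hBsupp
  -- integrability of the two derivative terms
  have hpdxAint : Integrable (pdx (fun q : ℝ × ℝ =>
      fderiv ℝ Ψ q (0, 1) * (θ q * θ q) * (φ (q.2 ^ 2 / k ^ 2) * φ (q.2 ^ 2 / k ^ 2)))) := by
    refine Continuous.integrable_of_hasCompactSupport ?_ (hAsupp.fderiv_apply ℝ ((1:ℝ), (0:ℝ)))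
    exact (ContinuousLinearMap.apply ℝ ℝ ((1:ℝ), (0:ℝ))).continuous.comp
      (hA.continuous_fderiv one_ne_zero)
  have hpdyBint : Integrable (pdy (fun q : ℝ × ℝ =>
      fderiv ℝ Ψ q (1, 0) * (θ q * θ q) * (φ (q.2 ^ 2 / k ^ 2) * φ (q.2 ^ 2 / k ^ 2)))) := by
    refine Continuous.integrable_of_hasCompactSupport ?_ (hBsupp.fderiv_apply ℝ ((0:ℝ), (1:ℝ)))
    exact (ContinuousLinearMap.apply ℝ ℝ ((0:ℝ), (1:ℝ))).continuous.comp
      (hB.continuous_fderiv one_ne_zero)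
  -- integrability of the two integrands of the statement
  have hθxc : Continuous (fun q : ℝ × ℝ => fderiv ℝ θ q (1, 0)) :=
    (ContinuousLinearMap.apply ℝ ℝ ((1:ℝ), (0:ℝ))).continuous.comp (hθ.continuous_fderiv one_ne_zero)
  have hθyc : Continuous (fun q : ℝ × ℝ => fderiv ℝ θ q (0, 1)) :=
    (ContinuousLinearMap.apply ℝ ℝ ((0:ℝ), (1:ℝ))).continuous.comp (hθ.continuous_fderiv one_ne_zero)
  have hLint : Integrable (fun p : ℝ × ℝ => jac Ψ θ p * θ p * (φ (p.2 ^ 2 / k ^ 2)) ^ 2) := by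
    refine Continuous.integrable_of_hasCompactSupport ?_ ?_
    · simp only [jac, pdx, pdy]
      exact (((hpdyC.continuous.mul hθxc).sub (hpdxC.continuous.mul hθyc)).mul
        (hθ.continuous)).mul ((hφs.continuous.comp continuous_snd).pow 2)
    · apply HasCompactSupport.intro hθsupp
      intro q hq
      simp [image_eq_zero_of_notMem_tsupport hq]
  have hRint : Integrable (fun p : ℝ × ℝ => pdx Ψ p * (θ p) ^ 2 * deriv φ (p.2 ^ 2 / k ^ 2)
      * φ (p.2 ^ 2 / k ^ 2) * (p.2 / k ^ 2)) := by
    refine Continuous.integrable_of_hasCompactSupport ?_ ?_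
    · simp only [pdx]
      exact ((((hpdxC.continuous.mul (hθ.continuous.pow 2)).mul
        (((hφC.continuous_deriv (by simp)).comp ((continuous_snd.pow 2).div_const _)))).mul
        (hφs.continuous.comp continuous_snd)).mul (continuous_snd.div_const _))
    · apply HasCompactSupport.intro hθsupp
      intro q hq
      simp [image_eq_zero_of_notMem_tsupport hq]
  have hkey : (fun p : ℝ × ℝ =>
        pdx (fun q : ℝ × ℝ => fderiv ℝ Ψ q (0, 1) * (θ q * θ q)
            * (φ (q.2 ^ 2 / k ^ 2) * φ (q.2 ^ 2 / k ^ 2))) p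
          - pdy (fun q : ℝ × ℝ => fderiv ℝ Ψ q (1, 0) * (θ q * θ q)
            * (φ (q.2 ^ 2 / k ^ 2) * φ (q.2 ^ 2 / k ^ 2))) p)
      = (fun p : ℝ × ℝ => 2 * (jac Ψ θ p * θ p * (φ (p.2 ^ 2 / k ^ 2)) ^ 2)
          - 4 * (pdx Ψ p * (θ p) ^ 2 * deriv φ (p.2 ^ 2 / k ^ 2) * φ (p.2 ^ 2 / k ^ 2)
              * (p.2 / k ^ 2))) :=
    funext fun p => my_key φ hφC k Ψ θ hΨ hθ p
  have e0 : (∫ p : ℝ × ℝ, (2 * (jac Ψ θ p * θ p * (φ (p.2 ^ 2 / k ^ 2)) ^ 2)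
      - 4 * (pdx Ψ p * (θ p) ^ 2 * deriv φ (p.2 ^ 2 / k ^ 2) * φ (p.2 ^ 2 / k ^ 2)
          * (p.2 / k ^ 2)))) = 0 := by
    rw [← hkey, integral_sub hpdxAint hpdyBint, hIA, hIB]
    ring
  have e1 : (∫ p : ℝ × ℝ, (2 * (jac Ψ θ p * θ p * (φ (p.2 ^ 2 / k ^ 2)) ^ 2)
      - 4 * (pdx Ψ p * (θ p) ^ 2 * deriv φ (p.2 ^ 2 / k ^ 2) * φ (p.2 ^ 2 / k ^ 2)
          * (p.2 / k ^ 2))))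
      = 2 * (∫ p : ℝ × ℝ, jac Ψ θ p * θ p * (φ (p.2 ^ 2 / k ^ 2)) ^ 2)
        - 4 * ∫ p : ℝ × ℝ, pdx Ψ p * (θ p) ^ 2 * deriv φ (p.2 ^ 2 / k ^ 2)
            * φ (p.2 ^ 2 / k ^ 2) * (p.2 / k ^ 2) := by
    rw [integral_sub (hLint.const_mul 2) (hRint.const_mul 4), integral_const_mul, integral_const_mul]
  linarith [e1.symm.trans e0]
end
end

section
/- Let (Ψ, θ, ξ) be a classical solution of the Newton–Boussinesq system on the channel as in the context. Then for every t ≥ 0, ∫_{ℝ²} θ(t)² dxdy ≤ e^{−t/(2L²P_r)} ∫_{ℝ²} θ(0)² dxdy + 4 L⁴ P_r² ∫_{ℝ²} g² dxdy. (Exponential absorbing estimate (16) of the paper, with explicit constants.) -/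
open MeasureTheory Real

noncomputable section

/-- A classical solution of the Newton–Boussinesq system on the channel `Ω = (0,L) × ℝ`:
a pair of jointly smooth functions `Ψ θ`, with spatial supports contained in a fixed
compact set `K ⊆ Ω` for all `t ≥ 0`, such that, with `ξ := ΔΨ` (spatial Laplacian),
`∂ₜξ − Δξ + J(Ψ,ξ) + (Ra/Pr) ∂ₓθ = f` and `∂ₜθ − (1/Pr) Δθ + J(Ψ,θ) = g`
hold at every point of `[0,∞) × Ω`. -/
structure NBSolution (L Pr Ra : ℝ) (f g : ℝ × ℝ → ℝ) where
  Psi : ℝ → ℝ × ℝ → ℝ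
  theta : ℝ → ℝ × ℝ → ℝ
  smooth_Psi : ContDiff ℝ (⊤ : ℕ∞) (fun q : ℝ × (ℝ × ℝ) => Psi q.1 q.2)
  smooth_theta : ContDiff ℝ (⊤ : ℕ∞) (fun q : ℝ × (ℝ × ℝ) => theta q.1 q.2)
  K : Set (ℝ × ℝ)
  K_compact : IsCompact K
  K_subset : K ⊆ channel L
  supp_Psi : ∀ t : ℝ, 0 ≤ t → tsupport (Psi t) ⊆ K
  supp_theta : ∀ t : ℝ, 0 ≤ t → tsupport (theta t) ⊆ K
  eq_xi : ∀ t : ℝ, 0 ≤ t → ∀ p ∈ channel L,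
    deriv (fun s => lap (Psi s) p) t - lap (lap (Psi t)) p
      + jac (Psi t) (lap (Psi t)) p + (Ra / Pr) * pdx (theta t) p = f p
  eq_theta : ∀ t : ℝ, 0 ≤ t → ∀ p ∈ channel L,
    deriv (fun s => theta s p) t - (1 / Pr) * lap (theta t) p + jac (Psi t) (theta t) p = g p

/-- The vortex `ξ := ΔΨ` of a solution. -/
def NBSolution.xi {L Pr Ra : ℝ} {f g : ℝ × ℝ → ℝ} (sol : NBSolution L Pr Ra f g) :
    ℝ → ℝ × ℝ → ℝ := fun t => lap (sol.Psi t)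


/-! ### Auxiliary lemmas -/

lemma contDiff_pdx {u : ℝ × ℝ → ℝ} (hu : ContDiff ℝ (⊤ : ℕ∞) u) : ContDiff ℝ (⊤ : ℕ∞) (pdx u) :=
  (hu.fderiv_right (by simp)).clm_apply contDiff_const

lemma contDiff_pdy {u : ℝ × ℝ → ℝ} (hu : ContDiff ℝ (⊤ : ℕ∞) u) : ContDiff ℝ (⊤ : ℕ∞) (pdy u) :=
  (hu.fderiv_right (by simp)).clm_apply contDiff_const

lemma hcs_pdx {u : ℝ × ℝ → ℝ} (hu : HasCompactSupport u) : HasCompactSupport (pdx u) :=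
  hu.fderiv_apply ℝ (1, 0)

lemma hcs_pdy {u : ℝ × ℝ → ℝ} (hu : HasCompactSupport u) : HasCompactSupport (pdy u) :=
  hu.fderiv_apply ℝ (0, 1)

lemma hcs_sq {f : ℝ × ℝ → ℝ} (h : HasCompactSupport f) :
    HasCompactSupport (fun p => f p ^ 2) := by
  have : (fun p => f p ^ 2) = f * f := by funext p; simp [Pi.mul_apply, sq]
  rw [this]; exact h.mul_left

lemma hcs_abs {f : ℝ × ℝ → ℝ} (h : HasCompactSupport f) :
    HasCompactSupport (fun p => |f p|) :=
  h.comp_left (g := fun x : ℝ => |x|) abs_zero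

lemma tsupport_pdx_subset (u : ℝ × ℝ → ℝ) : tsupport (pdx u) ⊆ tsupport u :=
  closure_minimal
    (fun x hx => support_fderiv_subset ℝ (show fderiv ℝ u x ≠ 0 from
      fun h => hx (by simp [pdx, h]))) (isClosed_tsupport u)

lemma hasDerivAt_slice_x {u : ℝ × ℝ → ℝ} (hu : Differentiable ℝ u) (x y : ℝ) :
    HasDerivAt (fun s => u (s, y)) (pdx u (x, y)) x :=
  (hu _).hasFDerivAt.comp_hasDerivAt x ((hasDerivAt_id x).prodMk (hasDerivAt_const x y))

/-- Integration by parts on `ℝ²` for compactly supported functions. -/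
lemma ibp {f g : ℝ × ℝ → ℝ} (v : ℝ × ℝ) (hf : ContDiff ℝ (⊤ : ℕ∞) f) (hg : ContDiff ℝ (⊤ : ℕ∞) g)
    (hgs : HasCompactSupport g) :
    ∫ x, f x * fderiv ℝ g x v = - ∫ x, fderiv ℝ f x v * g x := by
  have cf' : Continuous fun x => fderiv ℝ f x v :=
    ((hf.fderiv_right (m := (⊤ : ℕ∞)) (by simp)).continuous).clm_apply continuous_const
  have cg' : Continuous fun x => fderiv ℝ g x v :=
    ((hg.fderiv_right (m := (⊤ : ℕ∞)) (by simp)).continuous).clm_apply continuous_const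
  exact integral_mul_fderiv_eq_neg_fderiv_mul_of_integrable
    ((cf'.mul hg.continuous).integrable_of_hasCompactSupport hgs.mul_left)
    ((hf.continuous.mul cg').integrable_of_hasCompactSupport ((hgs.fderiv_apply ℝ v).mul_left))
    ((hf.continuous.mul hg.continuous).integrable_of_hasCompactSupport hgs.mul_left)
    (fun x _ => hf.differentiable (by simp) x) (fun x _ => hg.differentiable (by simp) x)

/-- Symmetry of second derivatives (Clairaut). -/
lemma fderiv_apply_comm {u : ℝ × ℝ → ℝ} (hu : ContDiff ℝ (⊤ : ℕ∞) u) (p v w : ℝ × ℝ) :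
    fderiv ℝ (fun q => fderiv ℝ u q w) p v = fderiv ℝ (fun q => fderiv ℝ u q v) p w := by
  have hdf : Differentiable ℝ (fderiv ℝ u) :=
    (hu.fderiv_right (m := (⊤ : ℕ∞)) (by simp)).differentiable (by simp)
  have hA : HasFDerivAt (fderiv ℝ u) (fderiv ℝ (fderiv ℝ u) p) p := (hdf p).hasFDerivAt
  have key : ∀ a b : ℝ × ℝ, fderiv ℝ (fun q => fderiv ℝ u q b) p a
      = fderiv ℝ (fderiv ℝ u) p a b := by
    intro a b
    have h1 : HasFDerivAt (fun q => fderiv ℝ u q b)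
        ((ContinuousLinearMap.apply ℝ ℝ b).comp (fderiv ℝ (fderiv ℝ u) p)) p :=
      (ContinuousLinearMap.apply ℝ ℝ b).hasFDerivAt.comp p hA
    rw [h1.fderiv]; rfl
  rw [key, key]
  exact second_derivative_symmetric (fun y => ((hu.differentiable (by simp)) y).hasFDerivAt) hA v w

lemma pdx_sq {u : ℝ × ℝ → ℝ} (hu : ContDiff ℝ (⊤ : ℕ∞) u) (p : ℝ × ℝ) (v : ℝ × ℝ) :
    fderiv ℝ (fun q => (1:ℝ)/2 * u q ^ 2) p v = u p * fderiv ℝ u p v := by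
  have hd : HasFDerivAt u (fderiv ℝ u p) p := ((hu.differentiable (by simp)) p).hasFDerivAt
  have h2 : HasFDerivAt (fun q => ((1:ℝ)/2) • (u q * u q))
      (((1:ℝ)/2) • (u p • fderiv ℝ u p + u p • fderiv ℝ u p)) p := by have h := (hd.mul hd).const_smul ((1:ℝ)/2); exact h
  have he : (fun q => (1:ℝ)/2 * u q ^ 2) = fun q => ((1:ℝ)/2) • (u q * u q) := by
    funext q; simp; ring
  rw [he, h2.fderiv]
  simp
  ring

/-- `∫ θ · J(Ψ, θ) = 0`. -/
lemma jac_self_zero {Ψ θ : ℝ × ℝ → ℝ} (hΨ : ContDiff ℝ (⊤ : ℕ∞) Ψ) (hθ : ContDiff ℝ (⊤ : ℕ∞) θ)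
    (hθs : HasCompactSupport θ) :
    ∫ p : ℝ × ℝ, θ p * jac Ψ θ p = 0 := by
  set h : ℝ × ℝ → ℝ := fun q => (1:ℝ)/2 * θ q ^ 2 with hh_def
  have hh : ContDiff ℝ (⊤ : ℕ∞) h := contDiff_const.mul (hθ.pow 2)
  have hhs : HasCompactSupport h := by
    have : h = (fun q => (1:ℝ)/2 * θ q) * θ := by funext q; simp [hh_def]; ring
    rw [this]; exact hθs.mul_left
  have cA : Continuous fun p => pdy Ψ p * fderiv ℝ h p (1, 0) :=
    (contDiff_pdy hΨ).continuous.mul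
      (((hh.fderiv_right (m := (⊤ : ℕ∞)) (by simp)).continuous).clm_apply continuous_const)
  have cB : Continuous fun p => pdx Ψ p * fderiv ℝ h p (0, 1) :=
    (contDiff_pdx hΨ).continuous.mul
      (((hh.fderiv_right (m := (⊤ : ℕ∞)) (by simp)).continuous).clm_apply continuous_const)
  have iA : Integrable (fun p => pdy Ψ p * fderiv ℝ h p (1, 0)) :=
    cA.integrable_of_hasCompactSupport ((hhs.fderiv_apply ℝ (1, 0)).mul_left)
  have iB : Integrable (fun p => pdx Ψ p * fderiv ℝ h p (0, 1)) :=
    cB.integrable_of_hasCompactSupport ((hhs.fderiv_apply ℝ (0, 1)).mul_left)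
  have e1 : (∫ p : ℝ × ℝ, θ p * jac Ψ θ p)
      = ∫ p : ℝ × ℝ, (pdy Ψ p * fderiv ℝ h p (1, 0) - pdx Ψ p * fderiv ℝ h p (0, 1)) := by
    congr 1; funext p
    rw [show fderiv ℝ h p (1, 0) = θ p * fderiv ℝ θ p (1, 0) from pdx_sq hθ p _,
        show fderiv ℝ h p (0, 1) = θ p * fderiv ℝ θ p (0, 1) from pdx_sq hθ p _]
    simp only [jac, pdx, pdy]; ring
  rw [e1, integral_sub iA iB, ibp (1, 0) (contDiff_pdy hΨ) hh hhs,
      ibp (0, 1) (contDiff_pdx hΨ) hh hhs]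
  have hcomm : ∀ p : ℝ × ℝ, fderiv ℝ (pdy Ψ) p (1, 0) = fderiv ℝ (pdx Ψ) p (0, 1) :=
    fun p => fderiv_apply_comm hΨ p (1, 0) (0, 1)
  simp only [hcomm]
  ring

/-- `∫ θ Δθ = -‖∂ₓθ‖² - ‖∂ᵧθ‖²`. -/
lemma integral_theta_lap {θ : ℝ × ℝ → ℝ} (hθ : ContDiff ℝ (⊤ : ℕ∞) θ) (hθs : HasCompactSupport θ) :
    ∫ p : ℝ × ℝ, θ p * lap θ p
      = -(∫ p : ℝ × ℝ, (pdx θ p) ^ 2) - ∫ p : ℝ × ℝ, (pdy θ p) ^ 2 := by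
  have i1 : Integrable (fun p : ℝ × ℝ => θ p * pdx (pdx θ) p) :=
    (hθ.continuous.mul (contDiff_pdx (contDiff_pdx hθ)).continuous).integrable_of_hasCompactSupport
      ((hcs_pdx (hcs_pdx hθs)).mul_left)
  have i2 : Integrable (fun p : ℝ × ℝ => θ p * pdy (pdy θ) p) :=
    (hθ.continuous.mul (contDiff_pdy (contDiff_pdy hθ)).continuous).integrable_of_hasCompactSupport
      ((hcs_pdy (hcs_pdy hθs)).mul_left)
  have e : (∫ p : ℝ × ℝ, θ p * lap θ p)
      = (∫ p : ℝ × ℝ, θ p * pdx (pdx θ) p) + ∫ p : ℝ × ℝ, θ p * pdy (pdy θ) p := by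
    rw [← integral_add i1 i2]; congr 1; funext p; simp [lap]; ring
  rw [e, show (∫ p : ℝ × ℝ, θ p * pdx (pdx θ) p) = - ∫ p : ℝ × ℝ, pdx θ p * pdx θ p from
        ibp (1, 0) hθ (contDiff_pdx hθ) (hcs_pdx hθs),
      show (∫ p : ℝ × ℝ, θ p * pdy (pdy θ) p) = - ∫ p : ℝ × ℝ, pdy θ p * pdy θ p from
        ibp (0, 1) hθ (contDiff_pdy hθ) (hcs_pdy hθs)]
  simp only [← pow_two]
  ring

/-- 1-D Poincaré inequality on `(0, L)`. -/
lemma poincare_1d {L : ℝ} (hL : 0 < L) {h h' : ℝ → ℝ}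
    (hd : ∀ x, HasDerivAt h (h' x) x) (hc' : Continuous h')
    (hv : ∀ x, x ∉ Set.Ioo 0 L → h x = 0) (hv' : ∀ x, x ∉ Set.Ioo 0 L → h' x = 0) :
    ∫ x : ℝ, h x ^ 2 ≤ L ^ 2 * ∫ x : ℝ, h' x ^ 2 := by
  have h0 : h 0 = 0 := hv 0 (by simp)
  have ftc : ∀ x : ℝ, h x = ∫ s in (0:ℝ)..x, h' s := by
    intro x
    rw [intervalIntegral.integral_eq_sub_of_hasDerivAt (fun t _ => hd t)
      (hc'.intervalIntegrable 0 x), h0, sub_zero]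
  set J : ℝ := ∫ s in Set.Ioc 0 L, h' s ^ 2 with hJ
  have hJ0 : 0 ≤ J := setIntegral_nonneg measurableSet_Ioc (fun s _ => sq_nonneg _)
  set A : ℝ := ∫ s in Set.Ioc 0 L, |h' s| with hA
  have hA0 : 0 ≤ A := setIntegral_nonneg measurableSet_Ioc (fun s _ => abs_nonneg _)
  have hbound : ∀ x ∈ Set.Icc (0:ℝ) L, |h x| ≤ A := by
    intro x hx
    rw [ftc x]
    calc |∫ s in (0:ℝ)..x, h' s| ≤ ∫ s in (0:ℝ)..x, |h' s| :=
          intervalIntegral.abs_integral_le_integral_abs hx.1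
      _ ≤ ∫ s in (0:ℝ)..L, |h' s| :=
          intervalIntegral.integral_mono_interval le_rfl hx.1 hx.2
            (Filter.Eventually.of_forall fun s => abs_nonneg _)
            (hc'.abs.intervalIntegrable 0 L)
      _ = A := by rw [intervalIntegral.integral_of_le hL.le]
  have hCS : A ^ 2 ≤ L * J := by
    have hconj : Real.HolderConjugate 2 2 := Real.HolderConjugate.two_two
    have hm1 : MemLp (fun s => |h' s|) (ENNReal.ofReal 2) (volume.restrict (Set.Ioc 0 L)) := by
      rw [show ENNReal.ofReal 2 = 2 by norm_num]
      refine (memLp_two_iff_integrable_sq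
        (hc'.abs.aestronglyMeasurable)).2 ?_
      have : Integrable (fun s => h' s ^ 2) (volume.restrict (Set.Ioc 0 L)) :=
        ((hc'.pow 2).integrableOn_Ioc)
      simpa [sq_abs] using this
    have hm2 : MemLp (fun _ : ℝ => (1:ℝ)) (ENNReal.ofReal 2) (volume.restrict (Set.Ioc 0 L)) :=
      memLp_const 1
    have key := integral_mul_le_Lp_mul_Lq_of_nonneg hconj
      (Filter.Eventually.of_forall fun s => abs_nonneg (h' s))
      (Filter.Eventually.of_forall fun _ => zero_le_one) hm1 hm2
    simp only [show ∀ a : ℝ, |h' a| ^ (2:ℝ) = h' a ^ 2 from fun a => by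
        rw [show (2:ℝ) = ((2:ℕ):ℝ) by norm_num, Real.rpow_natCast, sq_abs],
      show ((1:ℝ)) ^ (2:ℝ) = 1 from by norm_num, mul_one] at key
    have hvol : ∫ _ in Set.Ioc (0:ℝ) L, (1:ℝ) = L := by
      simp [Real.volume_Ioc, hL.le]
    rw [hvol, ← hJ] at key
    have : A ^ 2 ≤ (J ^ ((1:ℝ)/2) * L ^ ((1:ℝ)/2)) ^ 2 := by
      have h2 : (0:ℝ) ≤ J ^ ((1:ℝ)/2) * L ^ ((1:ℝ)/2) := by positivity
      nlinarith [key]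
    calc A ^ 2 ≤ (J ^ ((1:ℝ)/2) * L ^ ((1:ℝ)/2)) ^ 2 := this
      _ = J * L := by
          rw [mul_pow, ← Real.rpow_natCast (J ^ ((1:ℝ)/2)) 2, ← Real.rpow_natCast (L ^ ((1:ℝ)/2)) 2,
            ← Real.rpow_mul hJ0, ← Real.rpow_mul hL.le]
          norm_num
      _ = L * J := mul_comm _ _
  have e1 : (∫ x : ℝ, h x ^ 2) = ∫ x in Set.Ioc 0 L, h x ^ 2 :=
    (setIntegral_eq_integral_of_forall_compl_eq_zero
      (fun x hx => by rw [hv x (fun h' => hx (Set.Ioo_subset_Ioc_self h'))]; norm_num)).symm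
  have e2 : (∫ x : ℝ, h' x ^ 2) = J :=
    (setIntegral_eq_integral_of_forall_compl_eq_zero
      (fun x hx => by rw [hv' x (fun h'' => hx (Set.Ioo_subset_Ioc_self h''))]; norm_num)).symm
  rw [e1, e2]
  have hdiff : Differentiable ℝ h := fun x => (hd x).differentiableAt
  have hc : Continuous h := hdiff.continuous
  have hi1 : IntegrableOn (fun x => h x ^ 2) (Set.Ioc 0 L) := (hc.pow 2).integrableOn_Ioc
  have hi2 : IntegrableOn (fun _ : ℝ => A ^ 2) (Set.Ioc 0 L) :=
    integrableOn_const (by simp [Real.volume_Ioc])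
  calc (∫ x in Set.Ioc (0:ℝ) L, h x ^ 2) ≤ ∫ _ in Set.Ioc (0:ℝ) L, A ^ 2 := by
        refine setIntegral_mono_on hi1 hi2 measurableSet_Ioc (fun x hx => ?_)
        have := hbound x ⟨hx.1.le, hx.2⟩
        nlinarith [abs_nonneg (h x), neg_abs_le (h x), le_abs_self (h x)]
    _ = L * A ^ 2 := by
        rw [setIntegral_const]
        simp [Real.volume_Ioc, ENNReal.toReal_ofReal hL.le, smul_eq_mul, hL.le]
    _ ≤ L * (L * J) := by nlinarith [hCS, hL.le, sq_nonneg A]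
    _ = L ^ 2 * J := by ring

/-- Poincaré inequality on the channel. -/
lemma poincare {L : ℝ} (hL : 0 < L) {u : ℝ × ℝ → ℝ} (hu : ContDiff ℝ (⊤ : ℕ∞) u)
    (hcs : HasCompactSupport u) (hsupp : tsupport u ⊆ channel L) :
    ∫ p : ℝ × ℝ, u p ^ 2 ≤ L ^ 2 * ∫ p : ℝ × ℝ, pdx u p ^ 2 := by
  have hvan : ∀ x y : ℝ, x ∉ Set.Ioo 0 L → u (x, y) = 0 := fun x y hx =>
    image_eq_zero_of_notMem_tsupport (fun hmem => hx (hsupp hmem).1)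
  have hvan' : ∀ x y : ℝ, x ∉ Set.Ioo 0 L → pdx u (x, y) = 0 := fun x y hx =>
    image_eq_zero_of_notMem_tsupport
      (fun hmem => hx ((hsupp (tsupport_pdx_subset u hmem)).1))
  have i1 : Integrable (fun p : ℝ × ℝ => u p ^ 2) :=
    (hu.continuous.pow 2).integrable_of_hasCompactSupport (hcs_sq hcs)
  have i2 : Integrable (fun p : ℝ × ℝ => pdx u p ^ 2) :=
    ((contDiff_pdx hu).continuous.pow 2).integrable_of_hasCompactSupport (hcs_sq (hcs_pdx hcs))
  rw [MeasureTheory.Measure.volume_eq_prod] at i1 i2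
  calc (∫ p : ℝ × ℝ, u p ^ 2)
      = ∫ y : ℝ, ∫ x : ℝ, u (x, y) ^ 2 := by
        rw [MeasureTheory.Measure.volume_eq_prod, integral_prod_symm _ i1]
    _ ≤ ∫ y : ℝ, L ^ 2 * ∫ x : ℝ, pdx u (x, y) ^ 2 := by
        refine integral_mono i1.integral_prod_right (i2.integral_prod_right.const_mul _) ?_
        intro y
        exact poincare_1d hL (fun x => hasDerivAt_slice_x (hu.differentiable (by simp)) x y)
          ((contDiff_pdx hu).continuous.comp (continuous_id.prodMk continuous_const))
          (fun x hx => hvan x y hx) (fun x hx => hvan' x y hx)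
    _ = L ^ 2 * ∫ p : ℝ × ℝ, pdx u p ^ 2 := by
        rw [integral_const_mul, MeasureTheory.Measure.volume_eq_prod, integral_prod_symm _ i2]

/-- Cauchy–Schwarz for `L²(ℝ²)`. -/
lemma cauchy_schwarz_L2 {u w : ℝ × ℝ → ℝ} (hu : Continuous u) (hus : HasCompactSupport u)
    (hw : Continuous w) (hw2 : MemLp w 2 volume) :
    ∫ p : ℝ × ℝ, u p * w p
      ≤ (∫ p : ℝ × ℝ, u p ^ 2) ^ ((1:ℝ)/2) * (∫ p : ℝ × ℝ, w p ^ 2) ^ ((1:ℝ)/2) := by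
  have iuw : Integrable (fun p : ℝ × ℝ => u p * w p) :=
    (hu.mul hw).integrable_of_hasCompactSupport hus.mul_right
  have iab : Integrable (fun p : ℝ × ℝ => |u p| * |w p|) :=
    (hu.abs.mul hw.abs).integrable_of_hasCompactSupport ((hcs_abs hus).mul_right)
  have step1 : (∫ p : ℝ × ℝ, u p * w p) ≤ ∫ p : ℝ × ℝ, |u p| * |w p| := by
    refine integral_mono iuw iab (fun p => ?_)
    rw [← abs_mul]; exact le_abs_self _
  have hconj : Real.HolderConjugate 2 2 := Real.HolderConjugate.two_two
  have hm1 : MemLp (fun p : ℝ × ℝ => |u p|) (ENNReal.ofReal 2) volume := by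
    rw [show ENNReal.ofReal 2 = 2 by norm_num]
    exact hu.abs.memLp_of_hasCompactSupport (hcs_abs hus)
  have hm2 : MemLp (fun p : ℝ × ℝ => |w p|) (ENNReal.ofReal 2) volume := by
    rw [show ENNReal.ofReal 2 = 2 by norm_num]
    simpa [Real.norm_eq_abs] using hw2.norm
  have key := integral_mul_le_Lp_mul_Lq_of_nonneg hconj
    (Filter.Eventually.of_forall fun p => abs_nonneg (u p))
    (Filter.Eventually.of_forall fun p => abs_nonneg (w p)) hm1 hm2
  simp only [show ∀ a : ℝ, |a| ^ (2:ℝ) = a ^ 2 from fun a => by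
      rw [show (2:ℝ) = ((2:ℕ):ℝ) by norm_num, Real.rpow_natCast, sq_abs]] at key
  exact step1.trans key

lemma sq_rpow_half {x : ℝ} (hx : 0 ≤ x) : (x ^ ((1:ℝ)/2)) ^ 2 = x := by
  rw [← Real.rpow_natCast (x ^ ((1:ℝ)/2)) 2, ← Real.rpow_mul hx]
  norm_num

namespace NBSolution
variable {L Pr Ra : ℝ} {f g : ℝ × ℝ → ℝ} (sol : NBSolution L Pr Ra f g)

lemma theta_contDiff (t : ℝ) : ContDiff ℝ (⊤ : ℕ∞) (sol.theta t) :=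
  sol.smooth_theta.comp ((contDiff_const (c := t)).prodMk contDiff_id)

lemma Psi_contDiff (t : ℝ) : ContDiff ℝ (⊤ : ℕ∞) (sol.Psi t) :=
  sol.smooth_Psi.comp ((contDiff_const (c := t)).prodMk contDiff_id)

lemma theta_hcs (t : ℝ) (ht : 0 ≤ t) : HasCompactSupport (sol.theta t) :=
  sol.K_compact.of_isClosed_subset (isClosed_tsupport _) (sol.supp_theta t ht)

lemma theta_zero (t : ℝ) (ht : 0 ≤ t) {p : ℝ × ℝ} (hp : p ∉ sol.K) : sol.theta t p = 0 :=
  image_eq_zero_of_notMem_tsupport (fun h => hp (sol.supp_theta t ht h))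

/-- The time derivative of `θ`. -/
def Dtheta : ℝ → ℝ × ℝ → ℝ :=
  fun t p => fderiv ℝ (fun q : ℝ × (ℝ × ℝ) => sol.theta q.1 q.2) (t, p) (1, 0)

lemma hasDerivAt_theta (t : ℝ) (p : ℝ × ℝ) :
    HasDerivAt (fun s => sol.theta s p) (sol.Dtheta t p) t :=
  by have h := ((sol.smooth_theta.differentiable (by simp)) (t, p)).hasFDerivAt.comp_hasDerivAt t
      ((hasDerivAt_id t).prodMk (hasDerivAt_const t p)); exact h

lemma Dtheta_cont : Continuous fun q : ℝ × (ℝ × ℝ) => sol.Dtheta q.1 q.2 :=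
  ((sol.smooth_theta.fderiv_right (m := (⊤ : ℕ∞)) (by simp)).continuous).clm_apply continuous_const

/-- Differentiation of the energy under the integral sign. -/
lemma E_hasDerivAt (t : ℝ) (ht : 0 < t) :
    HasDerivAt (fun s => ∫ p : ℝ × ℝ, sol.theta s p ^ 2)
      (∫ p : ℝ × ℝ, 2 * sol.theta t p * sol.Dtheta t p) t := by
  have hjoint : Continuous fun q : ℝ × (ℝ × ℝ) => 2 * sol.theta q.1 q.2 * sol.Dtheta q.1 q.2 :=
    (continuous_const.mul sol.smooth_theta.continuous).mul sol.Dtheta_cont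
  obtain ⟨C, hC⟩ := (isCompact_Icc.prod sol.K_compact).exists_bound_of_continuousOn
    (s := Set.Icc (t/2) (3*t/2) ×ˢ sol.K) hjoint.continuousOn
  set bound : ℝ × ℝ → ℝ := Set.indicator sol.K (fun _ => C) with hbdef
  have hball : ∀ s ∈ Metric.ball t (t/2), s ∈ Set.Icc (t/2) (3*t/2) ∧ 0 < s := by
    intro s hs
    rw [Metric.mem_ball, Real.dist_eq, abs_sub_lt_iff] at hs
    constructor
    · constructor <;> linarith [hs.1, hs.2]
    · linarith [hs.2]
  refine (hasDerivAt_integral_of_dominated_loc_of_deriv_le (s := Metric.ball t (t/2)) (Metric.ball_mem_nhds t (by linarith))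
    (bound := bound)
    (F' := fun s p => 2 * sol.theta s p * sol.Dtheta s p)
    (Filter.Eventually.of_forall fun s =>
      (((sol.theta_contDiff s).continuous.pow 2).aestronglyMeasurable))
    ?_ ?_ ?_ ?_ ?_).2
  · exact ((sol.theta_contDiff t).continuous.pow 2).integrable_of_hasCompactSupport
      (hcs_sq (sol.theta_hcs t ht.le))
  · exact ((continuous_const.mul (sol.theta_contDiff t).continuous).mul
      (sol.Dtheta_cont.comp (continuous_const.prodMk continuous_id))).aestronglyMeasurable
  · refine Filter.Eventually.of_forall fun p => fun s hs => ?_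
    show ‖2 * sol.theta s p * sol.Dtheta s p‖ ≤ bound p
    by_cases hp : p ∈ sol.K
    · have := hC (s, p) ⟨(hball s hs).1, hp⟩
      rw [hbdef, Set.indicator_of_mem hp]
      simpa using this
    · rw [sol.theta_zero s (hball s hs).2.le hp, hbdef, Set.indicator_of_notMem hp]
      simp
  · exact (integrableOn_const sol.K_compact.measure_lt_top.ne).integrable_indicator
      sol.K_compact.isClosed.measurableSet
  · refine Filter.Eventually.of_forall fun p => fun s _ => ?_
    have h := (sol.hasDerivAt_theta s p).pow 2
    refine h.congr_deriv ?_
    norm_num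

/-- The key differential inequality for the energy. -/
lemma deriv_bound (hL : 0 < L) (hPr : 0 < Pr) (hgc : Continuous g) (hg2 : MemLp g 2 volume)
    (t : ℝ) (ht : 0 < t) :
    (∫ p : ℝ × ℝ, 2 * sol.theta t p * sol.Dtheta t p)
      ≤ -(1/(L^2*Pr)) * (∫ p : ℝ × ℝ, sol.theta t p ^ 2)
        + Pr * L^2 * ∫ p : ℝ × ℝ, g p ^ 2 := by
  have hθ : ContDiff ℝ (⊤ : ℕ∞) (sol.theta t) := sol.theta_contDiff t
  have hθs : HasCompactSupport (sol.theta t) := sol.theta_hcs t ht.le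
  have hΨ : ContDiff ℝ (⊤ : ℕ∞) (sol.Psi t) := sol.Psi_contDiff t
  have clap : Continuous (lap (sol.theta t)) :=
    (contDiff_pdx (contDiff_pdx hθ)).continuous.add (contDiff_pdy (contDiff_pdy hθ)).continuous
  have cjac : Continuous (jac (sol.Psi t) (sol.theta t)) :=
    ((contDiff_pdy hΨ).continuous.mul (contDiff_pdx hθ).continuous).sub
      ((contDiff_pdx hΨ).continuous.mul (contDiff_pdy hθ).continuous)
  have iLap : Integrable (fun p : ℝ × ℝ => sol.theta t p * lap (sol.theta t) p) :=
    (hθ.continuous.mul clap).integrable_of_hasCompactSupport hθs.mul_right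
  have iJac : Integrable (fun p : ℝ × ℝ => sol.theta t p * jac (sol.Psi t) (sol.theta t) p) :=
    (hθ.continuous.mul cjac).integrable_of_hasCompactSupport hθs.mul_right
  have iG : Integrable (fun p : ℝ × ℝ => sol.theta t p * g p) :=
    (hθ.continuous.mul hgc).integrable_of_hasCompactSupport hθs.mul_right
  have ptwise : ∀ p : ℝ × ℝ, 2 * sol.theta t p * sol.Dtheta t p
      = (2/Pr) * (sol.theta t p * lap (sol.theta t) p)
        - 2 * (sol.theta t p * jac (sol.Psi t) (sol.theta t) p)
        + 2 * (sol.theta t p * g p) := by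
    intro p
    by_cases hp : p ∈ channel L
    · have heq := sol.eq_theta t ht.le p hp
      have hD : deriv (fun s => sol.theta s p) t = sol.Dtheta t p :=
        (sol.hasDerivAt_theta t p).deriv
      rw [hD] at heq
      have hsolve : sol.Dtheta t p = g p + (1/Pr) * lap (sol.theta t) p
          - jac (sol.Psi t) (sol.theta t) p := by linarith [heq]
      rw [hsolve]
      field_simp
      ring
    · have h0 : sol.theta t p = 0 := sol.theta_zero t ht.le (fun hK => hp (sol.K_subset hK))
      rw [h0]; ring
  have esplit : (∫ p : ℝ × ℝ, 2 * sol.theta t p * sol.Dtheta t p)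
      = (2/Pr) * (∫ p : ℝ × ℝ, sol.theta t p * lap (sol.theta t) p)
        - 2 * (∫ p : ℝ × ℝ, sol.theta t p * jac (sol.Psi t) (sol.theta t) p)
        + 2 * (∫ p : ℝ × ℝ, sol.theta t p * g p) := by
    simp only [ptwise]
    have i12 : Integrable (fun p : ℝ × ℝ =>
        2/Pr * (sol.theta t p * lap (sol.theta t) p)
          - 2 * (sol.theta t p * jac (sol.Psi t) (sol.theta t) p)) :=
      (iLap.const_mul (2/Pr)).sub (iJac.const_mul 2)
    rw [integral_add i12 (iG.const_mul 2),
        integral_sub (iLap.const_mul (2/Pr)) (iJac.const_mul 2),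
        integral_const_mul, integral_const_mul, integral_const_mul]
  rw [esplit, integral_theta_lap hθ hθs, jac_self_zero hΨ hθ hθs]
  set E := ∫ p : ℝ × ℝ, sol.theta t p ^ 2 with hE
  set G := ∫ p : ℝ × ℝ, g p ^ 2 with hG
  set Px := ∫ p : ℝ × ℝ, pdx (sol.theta t) p ^ 2 with hPx
  set Py := ∫ p : ℝ × ℝ, pdy (sol.theta t) p ^ 2 with hPy
  have hE0 : 0 ≤ E := integral_nonneg fun p => sq_nonneg _
  have hG0 : 0 ≤ G := integral_nonneg fun p => sq_nonneg _
  have hPy0 : 0 ≤ Py := integral_nonneg fun p => sq_nonneg _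
  have hpoin : E ≤ L^2 * Px :=
    poincare hL hθ hθs ((sol.supp_theta t ht.le).trans sol.K_subset)
  have hCSineq : (∫ p : ℝ × ℝ, sol.theta t p * g p) ≤ E ^ ((1:ℝ)/2) * G ^ ((1:ℝ)/2) :=
    cauchy_schwarz_L2 hθ.continuous hθs hgc hg2
  set x := E ^ ((1:ℝ)/2) with hx
  set y := G ^ ((1:ℝ)/2) with hy
  have hx2 : x ^ 2 = E := sq_rpow_half hE0
  have hy2 : y ^ 2 = G := sq_rpow_half hG0
  have ha : (0:ℝ) < 1/(L^2*Pr) := by positivity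
  have hamgm : 2 * (x * y) ≤ (1/(L^2*Pr)) * E + Pr * L^2 * G := by
    rw [← hx2, ← hy2]
    have h2 : (0:ℝ) ≤ ((1/(L^2*Pr)) * x - y)^2 := sq_nonneg _
    have h3 : (1/(L^2*Pr)) * ((1/(L^2*Pr)) * x^2 + Pr * L^2 * y^2 - 2*(x*y))
        = ((1/(L^2*Pr)) * x - y)^2 := by field_simp; ring
    nlinarith [h2, h3, ha]
  have hscaled : 2 * (1/(L^2*Pr)) * E ≤ 2 * (1/Pr) * Px := by
    have h := mul_le_mul_of_nonneg_left hpoin (by positivity : (0:ℝ) ≤ 2 * (1/(L^2*Pr)))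
    calc 2 * (1/(L^2*Pr)) * E ≤ 2 * (1/(L^2*Pr)) * (L^2 * Px) := h
      _ = 2 * (1/Pr) * Px := by field_simp
  have hPyscaled : 0 ≤ (1/Pr) * Py := by positivity
  have hfix : (2:ℝ)/Pr = 2 * (1/Pr) := by ring
  rw [hfix]
  linarith [hscaled, hPyscaled, hCSineq, hamgm]

/-- Right-continuity of the energy at `t = 0`. -/
lemma E_cont0 : Filter.Tendsto (fun s => ∫ p : ℝ × ℝ, sol.theta s p ^ 2)
    (nhdsWithin 0 (Set.Ioi 0)) (nhds (∫ p : ℝ × ℝ, sol.theta 0 p ^ 2)) := by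
  have hjoint : Continuous fun q : ℝ × (ℝ × ℝ) => sol.theta q.1 q.2 ^ 2 :=
    sol.smooth_theta.continuous.pow 2
  obtain ⟨C, hC⟩ := (isCompact_Icc.prod sol.K_compact).exists_bound_of_continuousOn
    (s := Set.Icc (0:ℝ) 1 ×ˢ sol.K) hjoint.continuousOn
  refine tendsto_integral_filter_of_dominated_convergence
    (Set.indicator sol.K (fun _ => C)) ?_ ?_ ?_ ?_
  · exact Filter.Eventually.of_forall fun s =>
      ((sol.theta_contDiff s).continuous.pow 2).aestronglyMeasurable
  · have hmem : Set.Ioc (0:ℝ) 1 ∈ nhdsWithin (0:ℝ) (Set.Ioi 0) :=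
      Ioc_mem_nhdsGT_of_mem ⟨le_refl 0, zero_lt_one⟩
    refine Filter.eventually_iff_exists_mem.2 ⟨Set.Ioc 0 1, hmem, fun s hs => ?_⟩
    refine Filter.Eventually.of_forall fun p => ?_
    by_cases hp : p ∈ sol.K
    · have := hC (s, p) ⟨⟨hs.1.le, hs.2⟩, hp⟩
      rw [Set.indicator_of_mem hp]
      simpa using this
    · rw [sol.theta_zero s hs.1.le hp, Set.indicator_of_notMem hp]
      simp
  · exact (integrableOn_const sol.K_compact.measure_lt_top.ne).integrable_indicator
      sol.K_compact.isClosed.measurableSet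
  · refine Filter.Eventually.of_forall fun p => ?_
    have : Continuous fun s : ℝ => sol.theta s p ^ 2 :=
      hjoint.comp (continuous_id.prodMk continuous_const)
    exact (this.continuousAt.tendsto).mono_left nhdsWithin_le_nhds

end NBSolution

/-- Exponential absorbing estimate (16) with explicit constants. -/
theorem stmt9 (L Pr Ra : ℝ) (hL : 0 < L) (hPr : 0 < Pr) (hRa : 0 < Ra)
    (f g : ℝ × ℝ → ℝ) (hf : Continuous f) (hf2 : MemLp f 2 volume)
    (hg : Continuous g) (hg2 : MemLp g 2 volume)
    (sol : NBSolution L Pr Ra f g) :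
    ∀ t : ℝ, 0 ≤ t →
      (∫ p : ℝ × ℝ, (sol.theta t p) ^ 2)
        ≤ Real.exp (-t / (2 * L ^ 2 * Pr)) * (∫ p : ℝ × ℝ, (sol.theta 0 p) ^ 2)
          + 4 * L ^ 4 * Pr ^ 2 * ∫ p : ℝ × ℝ, (g p) ^ 2 := by
  intro t ht
  set E : ℝ → ℝ := fun s => ∫ p : ℝ × ℝ, sol.theta s p ^ 2 with hEdef
  set G : ℝ := ∫ p : ℝ × ℝ, g p ^ 2 with hGdef
  have hG0 : 0 ≤ G := integral_nonneg fun p => sq_nonneg _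
  have hE0 : ∀ s, 0 ≤ E s := fun s => integral_nonneg fun p => sq_nonneg _
  rcases eq_or_lt_of_le ht with heq | htpos
  · subst heq
    simp only [neg_zero, zero_div, Real.exp_zero, one_mul]
    have h4 : 0 ≤ 4 * L ^ 4 * Pr ^ 2 * G := by positivity
    linarith
  · set a : ℝ := 1 / (L ^ 2 * Pr) with hadef
    have ha : 0 < a := by rw [hadef]; positivity
    set r : ℝ := Pr * L ^ 2 * G with hrdef
    have hr0 : 0 ≤ r := by rw [hrdef]; positivity
    have key : ∀ ε, ε ∈ Set.Ioc (0:ℝ) t → E t ≤ gronwallBound (E ε) (-a) r (t - ε) := by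
      intro ε hε
      refine le_gronwallBound_of_liminf_deriv_right_le
        (f := E) (f' := fun x => ∫ p : ℝ × ℝ, 2 * sol.theta x p * sol.Dtheta x p)
        (fun x hx =>
          ((sol.E_hasDerivAt x (lt_of_lt_of_le hε.1 hx.1)).continuousAt).continuousWithinAt)
        (fun x hx r' hr' =>
          ((sol.E_hasDerivAt x (lt_of_lt_of_le hε.1 hx.1)).hasDerivWithinAt.liminf_right_slope_le
            hr'))
        le_rfl (fun x hx => ?_) t ⟨hε.2, le_refl t⟩
      have hb := sol.deriv_bound hL hPr hg hg2 x (lt_of_lt_of_le hε.1 hx.1)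
      have hgoal : -(1 / (L ^ 2 * Pr)) * E x + Pr * L ^ 2 * G = -a * E x + r := by
        rw [hadef, hrdef]
      calc (∫ p : ℝ × ℝ, 2 * sol.theta x p * sol.Dtheta x p)
          ≤ -(1 / (L ^ 2 * Pr)) * E x + Pr * L ^ 2 * G := hb
        _ = -a * E x + r := hgoal
    have hKne : (-a) ≠ 0 := neg_ne_zero.2 (ne_of_gt ha)
    have hgb : ∀ δ x : ℝ, gronwallBound δ (-a) r x
        = δ * Real.exp (-a * x) + r / (-a) * (Real.exp (-a * x) - 1) := by
      intro δ x; rw [gronwallBound_of_K_ne_0 hKne]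
    have h2 : Filter.Tendsto (fun ε : ℝ => t - ε) (nhdsWithin 0 (Set.Ioi 0)) (nhds t) := by
      have : Filter.Tendsto (fun ε : ℝ => t - ε) (nhds 0) (nhds (t - 0)) :=
        (continuous_const.sub continuous_id).continuousAt
      simpa using this.mono_left nhdsWithin_le_nhds
    have h3 : Filter.Tendsto (fun ε : ℝ => Real.exp (-a * (t - ε)))
        (nhdsWithin 0 (Set.Ioi 0)) (nhds (Real.exp (-a * t))) :=
      (Real.continuous_exp.tendsto _).comp (h2.const_mul (-a))
    have hlim : Filter.Tendsto (fun ε => gronwallBound (E ε) (-a) r (t - ε))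
        (nhdsWithin 0 (Set.Ioi 0)) (nhds (gronwallBound (E 0) (-a) r t)) := by
      simp only [hgb]
      exact (sol.E_cont0.mul h3).add
        ((h3.sub tendsto_const_nhds).const_mul (r / (-a)))
    have hEt : E t ≤ gronwallBound (E 0) (-a) r t :=
      ge_of_tendsto hlim (Filter.eventually_iff_exists_mem.2
        ⟨Set.Ioc 0 t, Ioc_mem_nhdsGT_of_mem ⟨le_refl 0, htpos⟩, fun ε hε => key ε hε⟩)
    rw [hgb] at hEt
    have hexp1 : Real.exp (-a * t) ≤ Real.exp (-t / (2 * L ^ 2 * Pr)) := by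
      apply Real.exp_le_exp.2
      have hd : t / (2 * L ^ 2 * Pr) ≤ t / (L ^ 2 * Pr) :=
        div_le_div_of_nonneg_left htpos.le (by positivity) (by nlinarith [sq_nonneg L, hPr])
      have he1 : -a * t = -(t / (L ^ 2 * Pr)) := by rw [hadef]; ring
      have he2 : -t / (2 * L ^ 2 * Pr) = -(t / (2 * L ^ 2 * Pr)) := by ring
      rw [he1, he2]
      linarith
    have hexp0 : 0 < Real.exp (-a * t) := Real.exp_pos _
    have hra : r / a = L ^ 4 * Pr ^ 2 * G := by
      rw [hrdef, hadef]; field_simp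
    have hrw : E 0 * Real.exp (-a * t) + r / (-a) * (Real.exp (-a * t) - 1)
        = E 0 * Real.exp (-a * t) + (r / a) * (1 - Real.exp (-a * t)) := by ring
    rw [hrw] at hEt
    have h1 : E 0 * Real.exp (-a * t) ≤ Real.exp (-t / (2 * L ^ 2 * Pr)) * E 0 := by
      nlinarith [hexp1, hE0 0]
    have hra0 : 0 ≤ r / a := div_nonneg hr0 ha.le
    have h2' : (r / a) * (1 - Real.exp (-a * t)) ≤ r / a := by nlinarith [hra0, hexp0]
    have h3' : r / a ≤ 4 * L ^ 4 * Pr ^ 2 * G := by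
      rw [hra]
      have : 0 ≤ 3 * (L ^ 4 * Pr ^ 2 * G) := by positivity
      linarith
    linarith
end
end

section
/- There exists a constant C > 0 such that for all smooth compactly supported functions Ψ, ξ : ℝ² → ℝ, |∫_{ℝ²} (∂_y Ψ)(∂_x ξ)(Δξ) dxdy| ≤ C ‖Ψ‖_{H²} ‖∇ξ‖_{L²}^{1/2} (‖∇ξ‖_{L²} + ‖Δξ‖_{L²})^{3/2}. (The trilinear estimate (31) of the paper, used to control ∫ J(Ψ,ξ)Δξ.) -/
open MeasureTheory Real

noncomputable section

/-! ### Auxiliary lemmas -/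

abbrev P2 := ℝ × ℝ

lemma integrable_cc {f : P2 → ℝ} (hf : Continuous f) (h2 : HasCompactSupport f) :
    Integrable f := hf.integrable_of_hasCompactSupport h2

lemma contDiff_pd {u : P2 → ℝ} (hu : ContDiff ℝ (⊤ : ℕ∞) u) (v : P2) :
    ContDiff ℝ (⊤ : ℕ∞) (fun p => fderiv ℝ u p v) :=
  (hu.fderiv_right (m := (⊤ : ℕ∞)) (by simp)).clm_apply contDiff_const

lemma cont_pd {u : P2 → ℝ} (hu : ContDiff ℝ (⊤ : ℕ∞) u) (v : P2) :
    Continuous (fun p => fderiv ℝ u p v) := (contDiff_pd hu v).continuous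

lemma hcs_pd {u : P2 → ℝ} (hu : HasCompactSupport u) (v : P2) :
    HasCompactSupport (fun p => fderiv ℝ u p v) :=
  hu.fderiv_apply ℝ v

lemma pdx_smooth {u : P2 → ℝ} (hu : ContDiff ℝ (⊤ : ℕ∞) u) : ContDiff ℝ (⊤ : ℕ∞) (pdx u) :=
  contDiff_pd hu (1, 0)

lemma pdy_smooth {u : P2 → ℝ} (hu : ContDiff ℝ (⊤ : ℕ∞) u) : ContDiff ℝ (⊤ : ℕ∞) (pdy u) :=
  contDiff_pd hu (0, 1)

lemma pdx_hcs {u : P2 → ℝ} (hu : HasCompactSupport u) : HasCompactSupport (pdx u) :=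
  hcs_pd hu (1, 0)

lemma pdy_hcs {u : P2 → ℝ} (hu : HasCompactSupport u) : HasCompactSupport (pdy u) :=
  hcs_pd hu (0, 1)

lemma fderiv_pd_eq {u : P2 → ℝ} (hu : ContDiff ℝ (⊤ : ℕ∞) u) (v w p) :
    fderiv ℝ (fun q => fderiv ℝ u q w) p v = fderiv ℝ (fderiv ℝ u) p v w := by
  have hd : DifferentiableAt ℝ (fderiv ℝ u) p :=
    ((hu.fderiv_right (m := (⊤ : ℕ∞)) (by simp)).differentiable (by simp)) p
  have h := ((ContinuousLinearMap.apply ℝ ℝ w).hasFDerivAt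
      (x := fderiv ℝ u p)).comp p hd.hasFDerivAt
  have h2 := h.fderiv
  calc fderiv ℝ (fun q => fderiv ℝ u q w) p v
      = fderiv ℝ ((ContinuousLinearMap.apply ℝ ℝ w) ∘ (fderiv ℝ u)) p v := rfl
    _ = fderiv ℝ (fderiv ℝ u) p v w := by rw [h2]; rfl

lemma pd_comm {u : P2 → ℝ} (hu : ContDiff ℝ (⊤ : ℕ∞) u) (v w : P2) (p : P2) :
    fderiv ℝ (fun q => fderiv ℝ u q w) p v = fderiv ℝ (fun q => fderiv ℝ u q v) p w := by
  rw [fderiv_pd_eq hu, fderiv_pd_eq hu]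
  exact (hu.contDiffAt.isSymmSndFDerivAt (by simp [minSmoothness_of_isRCLikeNormedField]; exact WithTop.coe_le_coe.mpr (le_top : (2:ℕ∞) ≤ ⊤))) v w

lemma pdx_pdy_comm {u : P2 → ℝ} (hu : ContDiff ℝ (⊤ : ℕ∞) u) : pdy (pdx u) = pdx (pdy u) := by
  funext p
  exact pd_comm hu (0, 1) (1, 0) p

/-- Cauchy-Schwarz for continuous compactly supported functions. -/
lemma myCS {f g : P2 → ℝ} (hf : Continuous f) (h2f : HasCompactSupport f)
    (hg : Continuous g) (h2g : HasCompactSupport g) :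
    (∫ p, f p * g p) ^ 2 ≤ (∫ p, f p ^ 2) * (∫ p, g p ^ 2) := by
  have hpq : Real.HolderConjugate 2 2 := by rw [Real.holderConjugate_iff]; norm_num
  have hmf : MemLp (fun p => |f p|) (ENNReal.ofReal 2) (volume : Measure P2) :=
    (hf.abs).memLp_of_hasCompactSupport (h2f.abs)
  have hmg : MemLp (fun p => |g p|) (ENNReal.ofReal 2) (volume : Measure P2) :=
    (hg.abs).memLp_of_hasCompactSupport (h2g.abs)
  have key := MeasureTheory.integral_mul_le_Lp_mul_Lq_of_nonneg (μ := (volume : Measure P2)) hpq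
    (f := fun p => |f p|) (g := fun p => |g p|)
    (Filter.Eventually.of_forall fun p => abs_nonneg _)
    (Filter.Eventually.of_forall fun p => abs_nonneg _) hmf hmg
  have e1 : ∀ p : P2, |f p| ^ (2:ℝ) = f p ^ 2 := by
    intro p; rw [show (2:ℝ) = ((2:ℕ):ℝ) by norm_num, Real.rpow_natCast, sq_abs]
  have e2 : ∀ p : P2, |g p| ^ (2:ℝ) = g p ^ 2 := by
    intro p; rw [show (2:ℝ) = ((2:ℕ):ℝ) by norm_num, Real.rpow_natCast, sq_abs]
  rw [show (∫ p, |f p| ^ (2:ℝ)) = ∫ p, f p ^ 2 from by simp_rw [e1],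
      show (∫ p, |g p| ^ (2:ℝ)) = ∫ p, g p ^ 2 from by simp_rw [e2]] at key
  have habs : |∫ p, f p * g p| ≤ ∫ p, |f p| * |g p| := by
    calc |∫ p, f p * g p| = ‖∫ p, f p * g p‖ := (Real.norm_eq_abs _).symm
      _ ≤ ∫ p, ‖f p * g p‖ := norm_integral_le_integral_norm _
      _ = ∫ p, |f p| * |g p| := by simp_rw [Real.norm_eq_abs, abs_mul]
  have h1 : |∫ p, f p * g p| ≤ (∫ p, f p ^ 2) ^ ((1:ℝ)/2) * (∫ p, g p ^ 2) ^ ((1:ℝ)/2) :=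
    habs.trans key
  have hf2 : (0:ℝ) ≤ ∫ p, f p ^ 2 := integral_nonneg fun p => sq_nonneg _
  have hg2 : (0:ℝ) ≤ ∫ p, g p ^ 2 := integral_nonneg fun p => sq_nonneg _
  calc (∫ p, f p * g p) ^ 2 = |∫ p, f p * g p| ^ 2 := (sq_abs _).symm
    _ ≤ ((∫ p, f p ^ 2) ^ ((1:ℝ)/2) * (∫ p, g p ^ 2) ^ ((1:ℝ)/2)) ^ 2 :=
        pow_le_pow_left₀ (abs_nonneg _) h1 2
    _ = (∫ p, f p ^ 2) * (∫ p, g p ^ 2) := by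
        rw [mul_pow, ← Real.rpow_natCast ((∫ p, f p ^ 2) ^ ((1:ℝ)/2)) 2,
          ← Real.rpow_natCast ((∫ p, g p ^ 2) ^ ((1:ℝ)/2)) 2,
          ← Real.rpow_mul hf2, ← Real.rpow_mul hg2]
        norm_num

/-- Integration by parts. -/
lemma myIBP {f g : P2 → ℝ} (v : P2) (hf : ContDiff ℝ (⊤ : ℕ∞) f) (h2f : HasCompactSupport f)
    (hg : ContDiff ℝ (⊤ : ℕ∞) g) (h2g : HasCompactSupport g) :
    ∫ p, f p * fderiv ℝ g p v = - ∫ p, fderiv ℝ f p v * g p := by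
  exact integral_mul_fderiv_eq_neg_fderiv_mul_of_integrable
    (integrable_cc ((cont_pd hf v).mul hg.continuous) ((h2f.fderiv_apply ℝ v).mul_right))
    (integrable_cc (hf.continuous.mul (cont_pd hg v)) (h2f.mul_right))
    (integrable_cc (hf.continuous.mul hg.continuous) (h2f.mul_right))
    (fun x _ => hf.differentiable (by simp) x) (fun x _ => hg.differentiable (by simp) x)

lemma ibp_x {f g : P2 → ℝ} (hf : ContDiff ℝ (⊤ : ℕ∞) f) (h2f : HasCompactSupport f)
    (hg : ContDiff ℝ (⊤ : ℕ∞) g) (h2g : HasCompactSupport g) :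
    ∫ p, f p * pdx g p = - ∫ p, pdx f p * g p := myIBP (1, 0) hf h2f hg h2g

lemma ibp_y {f g : P2 → ℝ} (hf : ContDiff ℝ (⊤ : ℕ∞) f) (h2f : HasCompactSupport f)
    (hg : ContDiff ℝ (⊤ : ℕ∞) g) (h2g : HasCompactSupport g) :
    ∫ p, f p * pdy g p = - ∫ p, pdy f p * g p := myIBP (0, 1) hf h2f hg h2g

lemma opnorm_le (L : P2 →L[ℝ] ℝ) : ‖L‖ ≤ |L (1,0)| + |L (0,1)| := by
  refine L.opNorm_le_bound (by positivity) (fun z => ?_)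
  have hz : z = z.1 • ((1:ℝ),(0:ℝ)) + z.2 • ((0:ℝ),(1:ℝ)) := by
    ext <;> simp
  calc ‖L z‖ = |z.1 * L (1,0) + z.2 * L (0,1)| := by
        conv_lhs => rw [hz]
        rw [map_add, _root_.map_smul, _root_.map_smul]
        simp [Real.norm_eq_abs]
    _ ≤ |z.1| * |L (1,0)| + |z.2| * |L (0,1)| := by
        refine (abs_add_le _ _).trans ?_
        rw [abs_mul, abs_mul]
    _ ≤ ‖z‖ * |L (1,0)| + ‖z‖ * |L (0,1)| := by
        have h1 : |z.1| ≤ ‖z‖ := norm_fst_le z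
        have h2 : |z.2| ≤ ‖z‖ := norm_snd_le z
        gcongr <;> positivity
    _ = (|L (1,0)| + |L (0,1)|) * ‖z‖ := by ring

lemma fderiv_norm_sq_le {v : P2 → ℝ} (hv : Differentiable ℝ v) (p : P2) :
    ‖fderiv ℝ v p‖ ^ 2 ≤ 2 * gradSq v p := by
  have h := opnorm_le (fderiv ℝ v p)
  have h0 : (0:ℝ) ≤ ‖fderiv ℝ v p‖ := norm_nonneg _
  have h1 : ‖fderiv ℝ v p‖ ^ 2 ≤ (|fderiv ℝ v p (1,0)| + |fderiv ℝ v p (0,1)|) ^ 2 :=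
    pow_le_pow_left₀ h0 h 2
  refine h1.trans ?_
  simp only [gradSq, pdx, pdy]
  nlinarith [sq_abs (fderiv ℝ v p (1,0)), sq_abs (fderiv ℝ v p (0,1)),
    sq_nonneg (|fderiv ℝ v p (1,0)| - |fderiv ℝ v p (0,1)|)]

def K0 : ℝ :=
  ((MeasureTheory.lintegralPowLePowLIntegralFDerivConst (volume : Measure P2) 2 : NNReal) : ℝ)

lemma K0_nonneg : 0 ≤ K0 := NNReal.coe_nonneg _

/-- Ladyzhenskaya's inequality. -/
lemma lady {v : P2 → ℝ} (hv : ContDiff ℝ (⊤ : ℕ∞) v) (h2v : HasCompactSupport v) :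
    ∫ p : P2, (v p)^4 ≤ (8 * K0) * ((∫ p : P2, (v p)^2) * (∫ p : P2, gradSq v p)) := by
  set w : P2 → ℝ := fun p => v p * v p with hw_def
  have hw : ContDiff ℝ (⊤ : ℕ∞) w := hv.mul hv
  have h2w : HasCompactSupport w := h2v.mul_right
  have hfderivw_cont : Continuous (fderiv ℝ w) := (hw.fderiv_right (m := (⊤ : ℕ∞)) (by simp)).continuous
  have hfderivv_cont : Continuous (fderiv ℝ v) := (hv.fderiv_right (m := (⊤ : ℕ∞)) (by simp)).continuous
  have hfin : Real.HolderConjugate (Module.finrank ℝ P2) 2 := by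
    have h2 : Module.finrank ℝ P2 = 2 := by simp
    rw [h2]; rw [Real.holderConjugate_iff]; norm_num
  have GNS := MeasureTheory.lintegral_pow_le_pow_lintegral_fderiv (volume : Measure P2)
    (hw.of_le (by simp)) h2w hfin
  have h2v4 : HasCompactSupport (fun p : P2 => v p ^ 4) :=
    h2v.comp_left (g := fun t : ℝ => t^4) (by simp)
  have i4 : Integrable (fun p : P2 => v p ^ 4) := integrable_cc (hv.continuous.pow 4) h2v4
  have hL : (∫⁻ p : P2, (‖w p‖₊ : ENNReal) ^ (2:ℝ)) = ENNReal.ofReal (∫ p : P2, v p ^ 4) := by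
    rw [MeasureTheory.ofReal_integral_eq_lintegral_ofReal i4
      (Filter.Eventually.of_forall fun p => by positivity)]
    refine lintegral_congr fun p => ?_
    rw [← enorm_eq_nnnorm, ← ofReal_norm,
      ENNReal.ofReal_rpow_of_nonneg (norm_nonneg _) (by norm_num : (0:ℝ) ≤ 2)]
    congr 1
    rw [Real.norm_eq_abs, show (2:ℝ) = ((2:ℕ):ℝ) by norm_num, Real.rpow_natCast, sq_abs]
    simp only [hw_def]; ring
  have iD : Integrable (fun p : P2 => ‖fderiv ℝ w p‖) :=
    integrable_cc hfderivw_cont.norm ((h2w.fderiv ℝ).norm)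
  have hR : (∫⁻ p : P2, (‖fderiv ℝ w p‖₊ : ENNReal))
      = ENNReal.ofReal (∫ p : P2, ‖fderiv ℝ w p‖) := by
    rw [MeasureTheory.ofReal_integral_eq_lintegral_ofReal iD
      (Filter.Eventually.of_forall fun p => norm_nonneg _)]
    exact lintegral_congr fun p => (ofReal_norm _).symm
  simp only [← enorm_eq_nnnorm] at hL hR
  rw [hL, hR] at GNS
  have hI₁ : (0:ℝ) ≤ ∫ p : P2, ‖fderiv ℝ w p‖ := integral_nonneg fun p => norm_nonneg _
  have hK : (MeasureTheory.lintegralPowLePowLIntegralFDerivConst (volume : Measure P2) 2 :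
      ENNReal) * ENNReal.ofReal (∫ p : P2, ‖fderiv ℝ w p‖) ^ (2:ℝ)
      = ENNReal.ofReal (K0 * (∫ p : P2, ‖fderiv ℝ w p‖)^2) := by
    rw [ENNReal.ofReal_rpow_of_nonneg hI₁ (by norm_num : (0:ℝ) ≤ 2),
      ENNReal.ofReal_mul K0_nonneg]
    congr 1
    · simp [K0]
    · congr 1; rw [show (2:ℝ) = ((2:ℕ):ℝ) by norm_num, Real.rpow_natCast]
  rw [hK] at GNS
  have main1 : ∫ p : P2, v p ^ 4 ≤ K0 * (∫ p : P2, ‖fderiv ℝ w p‖)^2 :=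
    (ENNReal.ofReal_le_ofReal_iff (mul_nonneg K0_nonneg (sq_nonneg _))).1 GNS
  have hpt : ∀ p : P2, ‖fderiv ℝ w p‖ ≤ 2 * (|v p| * ‖fderiv ℝ v p‖) := by
    intro p
    have hd := (hv.differentiable (by simp) p).hasFDerivAt
    have hw' : HasFDerivAt w (v p • fderiv ℝ v p + v p • fderiv ℝ v p) p := hd.mul hd
    rw [hw'.fderiv]
    calc ‖v p • fderiv ℝ v p + v p • fderiv ℝ v p‖
        ≤ ‖v p • fderiv ℝ v p‖ + ‖v p • fderiv ℝ v p‖ := norm_add_le _ _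
      _ = 2 * (|v p| * ‖fderiv ℝ v p‖) := by
          rw [norm_smul, Real.norm_eq_abs]; ring
  have iJ : Integrable (fun p : P2 => |v p| * ‖fderiv ℝ v p‖) :=
    integrable_cc (hv.continuous.abs.mul hfderivv_cont.norm) (h2v.abs.mul_right)
  have hI₁J : (∫ p : P2, ‖fderiv ℝ w p‖) ≤ 2 * ∫ p : P2, |v p| * ‖fderiv ℝ v p‖ := by
    rw [← integral_const_mul]
    exact integral_mono iD (iJ.const_mul 2) hpt
  have hJsq := myCS (hv.continuous.abs) h2v.abs hfderivv_cont.norm ((h2v.fderiv ℝ).norm)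
  have e1 : (∫ p : P2, |v p| ^ 2) = ∫ p : P2, v p ^ 2 := by simp_rw [sq_abs]
  rw [e1] at hJsq
  have iN2 : Integrable (fun p : P2 => ‖fderiv ℝ v p‖ ^ 2) :=
    integrable_cc (hfderivv_cont.norm.pow 2)
      ((h2v.fderiv ℝ).comp_left (g := fun L : P2 →L[ℝ] ℝ => ‖L‖^2) (by simp))
  have h2gs : HasCompactSupport (gradSq v) := by
    have a1 : HasCompactSupport (fun p : P2 => (fderiv ℝ v p (1,0))^2) :=
      (h2v.fderiv_apply ℝ (1,0)).comp_left (g := fun t : ℝ => t^2) (by simp)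
    have a2 : HasCompactSupport (fun p : P2 => (fderiv ℝ v p (0,1))^2) :=
      (h2v.fderiv_apply ℝ (0,1)).comp_left (g := fun t : ℝ => t^2) (by simp)
    exact a1.add a2
  have cgs : Continuous (gradSq v) :=
    ((cont_pd hv (1,0)).pow 2).add ((cont_pd hv (0,1)).pow 2)
  have igs : Integrable (gradSq v) := integrable_cc cgs h2gs
  have hN2 : (∫ p : P2, ‖fderiv ℝ v p‖ ^ 2) ≤ 2 * ∫ p : P2, gradSq v p := by
    rw [← integral_const_mul]
    exact integral_mono iN2 (igs.const_mul 2)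
      (fun p => fderiv_norm_sq_le (hv.differentiable (by simp)) p)
  have hA0 : (0:ℝ) ≤ ∫ p : P2, v p ^ 2 := integral_nonneg fun p => sq_nonneg _
  calc ∫ p : P2, v p ^ 4 ≤ K0 * (∫ p : P2, ‖fderiv ℝ w p‖)^2 := main1
    _ ≤ K0 * (2 * ∫ p : P2, |v p| * ‖fderiv ℝ v p‖)^2 :=
        mul_le_mul_of_nonneg_left (pow_le_pow_left₀ hI₁ hI₁J 2) K0_nonneg
    _ = (4*K0) * (∫ p : P2, |v p| * ‖fderiv ℝ v p‖)^2 := by ring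
    _ ≤ (4*K0) * ((∫ p : P2, v p ^ 2) * (∫ p : P2, ‖fderiv ℝ v p‖ ^ 2)) :=
        mul_le_mul_of_nonneg_left hJsq (by nlinarith [K0_nonneg])
    _ ≤ (4*K0) * ((∫ p : P2, v p ^ 2) * (2 * ∫ p : P2, gradSq v p)) := by
        refine mul_le_mul_of_nonneg_left (mul_le_mul_of_nonneg_left hN2 hA0) ?_
        have := K0_nonneg; linarith
    _ = (8 * K0) * ((∫ p : P2, v p ^ 2) * (∫ p : P2, gradSq v p)) := by ring

/-- The mixed second derivative identity `∫ (∂ₓ∂ᵧξ)² = ∫ (∂ₓₓξ)(∂ᵧᵧξ)`. -/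
lemma key_mixed {ξ : P2 → ℝ} (hξ : ContDiff ℝ (⊤ : ℕ∞) ξ) (h2ξ : HasCompactSupport ξ) :
    (∫ p : P2, (pdx (pdy ξ) p)^2) = ∫ p : P2, pdx (pdx ξ) p * pdy (pdy ξ) p := by
  have ha : ContDiff ℝ (⊤ : ℕ∞) (pdx ξ) := pdx_smooth hξ
  have hb : ContDiff ℝ (⊤ : ℕ∞) (pdy ξ) := pdy_smooth hξ
  have hc : ContDiff ℝ (⊤ : ℕ∞) (pdx (pdy ξ)) := pdx_smooth hb
  have h2a : HasCompactSupport (pdx ξ) := pdx_hcs h2ξ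
  have h2b : HasCompactSupport (pdy ξ) := pdy_hcs h2ξ
  have h2c : HasCompactSupport (pdx (pdy ξ)) := pdx_hcs h2b
  have comm1 : pdy (pdx ξ) = pdx (pdy ξ) := pdx_pdy_comm hξ
  have comm2 : pdy (pdx (pdy ξ)) = pdx (pdy (pdy ξ)) := pdx_pdy_comm hb
  have step0 : (∫ p : P2, (pdx (pdy ξ) p)^2)
      = ∫ p : P2, pdx (pdy ξ) p * pdy (pdx ξ) p := by
    rw [comm1]
    congr 1; funext p; ring
  have step1 : (∫ p : P2, pdx (pdy ξ) p * pdy (pdx ξ) p)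
      = - ∫ p : P2, pdy (pdx (pdy ξ)) p * pdx ξ p := ibp_y hc h2c ha h2a
  have step2 : (∫ p : P2, pdy (pdx (pdy ξ)) p * pdx ξ p)
      = ∫ p : P2, pdx ξ p * pdx (pdy (pdy ξ)) p := by
    rw [comm2]
    congr 1; funext p; ring
  have step3 : (∫ p : P2, pdx ξ p * pdx (pdy (pdy ξ)) p)
      = - ∫ p : P2, pdx (pdx ξ) p * pdy (pdy ξ) p :=
    ibp_x ha h2a (pdy_smooth hb) (pdy_hcs h2b)
  rw [step0, step1, step2, step3, neg_neg]

lemma hsum (Ψ : P2 → ℝ) :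
    (∑ i ∈ Finset.range (2 + 1), ∑ j ∈ Finset.range (2 + 1 - i),
      ∫ p : ℝ × ℝ, (pdx^[i] (pdy^[j] Ψ) p) ^ 2)
    = (∫ p : P2, (Ψ p)^2) + (∫ p : P2, (pdy Ψ p)^2) + (∫ p : P2, (pdy (pdy Ψ) p)^2)
      + (∫ p : P2, (pdx Ψ p)^2) + (∫ p : P2, (pdx (pdy Ψ) p)^2)
      + (∫ p : P2, (pdx (pdx Ψ) p)^2) := by
  simp [Finset.sum_range_succ, Function.iterate_succ_apply', -Function.iterate_succ]
  ring

lemma Hnorm_two_sq (Ψ : P2 → ℝ) : Hnorm 2 Ψ ^ 2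
    = (∫ p : P2, (Ψ p)^2) + (∫ p : P2, (pdy Ψ p)^2) + (∫ p : P2, (pdy (pdy Ψ) p)^2)
      + (∫ p : P2, (pdx Ψ p)^2) + (∫ p : P2, (pdx (pdy Ψ) p)^2)
      + (∫ p : P2, (pdx (pdx Ψ) p)^2) := by
  have nn : ∀ u : P2 → ℝ, (0:ℝ) ≤ ∫ p : P2, (u p)^2 :=
    fun u => integral_nonneg fun p => sq_nonneg _
  have hpos := add_nonneg (add_nonneg (add_nonneg (add_nonneg (add_nonneg (nn Ψ)
    (nn (pdy Ψ))) (nn (pdy (pdy Ψ)))) (nn (pdx Ψ))) (nn (pdx (pdy Ψ)))) (nn (pdx (pdx Ψ)))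
  rw [Hnorm, hsum Ψ, Real.sq_sqrt hpos]

set_option maxHeartbeats 2000000 in
/-- Trilinear estimate (31). -/
theorem stmt18 :
    ∃ C > (0 : ℝ), ∀ Ψ ξ : ℝ × ℝ → ℝ,
      ContDiff ℝ (⊤ : ℕ∞) Ψ → HasCompactSupport Ψ → ContDiff ℝ (⊤ : ℕ∞) ξ → HasCompactSupport ξ →
        |∫ p : ℝ × ℝ, pdy Ψ p * pdx ξ p * lap ξ p|
          ≤ C * Hnorm 2 Ψ * (gradL2 ξ) ^ ((1 : ℝ) / 2)
            * (gradL2 ξ + L2norm (lap ξ)) ^ ((3 : ℝ) / 2) := by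
  refine ⟨8 * K0 + 1, by nlinarith [K0_nonneg], ?_⟩
  intro Ψ ξ hΨ h2Ψ hξ h2ξ
  have hf : ContDiff ℝ (⊤ : ℕ∞) (pdy Ψ) := pdy_smooth hΨ
  have h2f : HasCompactSupport (pdy Ψ) := pdy_hcs h2Ψ
  have hg : ContDiff ℝ (⊤ : ℕ∞) (pdx ξ) := pdx_smooth hξ
  have h2g : HasCompactSupport (pdx ξ) := pdx_hcs h2ξ
  have hxx : ContDiff ℝ (⊤ : ℕ∞) (pdx (pdx ξ)) := pdx_smooth hg
  have hyy : ContDiff ℝ (⊤ : ℕ∞) (pdy (pdy ξ)) := pdy_smooth (pdy_smooth hξ)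
  have h2xx : HasCompactSupport (pdx (pdx ξ)) := pdx_hcs h2g
  have h2yy : HasCompactSupport (pdy (pdy ξ)) := pdy_hcs (pdy_hcs h2ξ)
  have hh : ContDiff ℝ (⊤ : ℕ∞) (lap ξ) := hxx.add hyy
  have h2h : HasCompactSupport (lap ξ) := h2xx.add h2yy
  have isq : ∀ (u : P2 → ℝ), Continuous u → HasCompactSupport u →
      Integrable (fun p : P2 => (u p)^2) := fun u hu h2u =>
    integrable_cc (hu.pow 2) (h2u.comp_left (g := fun t : ℝ => t^2) (by simp))
  have nn : ∀ u : P2 → ℝ, (0:ℝ) ≤ ∫ p : P2, (u p)^2 :=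
    fun u => integral_nonneg fun p => sq_nonneg _
  set A := Hnorm 2 Ψ with hA_def
  set B := gradL2 ξ with hB_def
  set E := L2norm (lap ξ) with hE_def
  have hA0 : 0 ≤ A := Real.sqrt_nonneg _
  have hB0 : 0 ≤ B := Real.sqrt_nonneg _
  have hE0 : 0 ≤ E := Real.sqrt_nonneg _
  have hA2 := Hnorm_two_sq Ψ
  have gsnn : ∀ u : P2 → ℝ, (0:ℝ) ≤ ∫ p : P2, gradSq u p := by
    intro u
    refine integral_nonneg fun p => ?_
    simp only [gradSq]; positivity
  have hB2 : B^2 = ∫ p : P2, gradSq ξ p := by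
    rw [hB_def, gradL2, Real.sq_sqrt (gsnn ξ)]
  have hE2 : E^2 = ∫ p : P2, (lap ξ p)^2 := by
    rw [hE_def, L2norm, Real.sq_sqrt (nn _)]
  have gradSplit : ∀ (u : P2 → ℝ), ContDiff ℝ (⊤ : ℕ∞) u → HasCompactSupport u →
      (∫ p : P2, gradSq u p) = (∫ p : P2, (pdx u p)^2) + (∫ p : P2, (pdy u p)^2) := by
    intro u hu h2u
    exact integral_add (isq _ (pdx_smooth hu).continuous (pdx_hcs h2u))
      (isq _ (pdy_smooth hu).continuous (pdy_hcs h2u))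
  have hfA : (∫ p : P2, (pdy Ψ p)^2) ≤ A^2 := by
    rw [hA2]
    linarith [nn Ψ, nn (pdy (pdy Ψ)), nn (pdx Ψ), nn (pdx (pdy Ψ)), nn (pdx (pdx Ψ))]
  have hgradfA : (∫ p : P2, gradSq (pdy Ψ) p) ≤ A^2 := by
    rw [gradSplit _ hf h2f, hA2]
    linarith [nn Ψ, nn (pdy Ψ), nn (pdx Ψ), nn (pdx (pdx Ψ))]
  have hgB : (∫ p : P2, (pdx ξ p)^2) ≤ B^2 := by
    rw [hB2, gradSplit _ hξ h2ξ]
    linarith [nn (pdy ξ)]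
  have comm1 : pdy (pdx ξ) = pdx (pdy ξ) := pdx_pdy_comm hξ
  have hkey := key_mixed hξ h2ξ
  have imix : Integrable (fun p : P2 => pdx (pdx ξ) p * pdy (pdy ξ) p) :=
    integrable_cc (hxx.continuous.mul hyy.continuous) (h2xx.mul_right)
  have lapExpand : (∫ p : P2, (lap ξ p)^2)
      = (∫ p : P2, (pdx (pdx ξ) p)^2) + 2*(∫ p : P2, pdx (pdx ξ) p * pdy (pdy ξ) p)
        + (∫ p : P2, (pdy (pdy ξ) p)^2) := by
    have e : (∫ p : P2, (lap ξ p)^2) = ∫ p : P2, ((pdx (pdx ξ) p)^2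
        + (2*(pdx (pdx ξ) p * pdy (pdy ξ) p) + (pdy (pdy ξ) p)^2)) := by
      congr 1; funext p; simp only [lap]; ring
    have ia := isq _ hxx.continuous h2xx
    have ib : Integrable (fun p : P2 => 2*(pdx (pdx ξ) p * pdy (pdy ξ) p)) :=
      imix.const_mul 2
    have ic := isq _ hyy.continuous h2yy
    have ibc : Integrable (fun p : P2 =>
        2*(pdx (pdx ξ) p * pdy (pdy ξ) p) + (pdy (pdy ξ) p)^2) := ib.add ic
    rw [e, integral_add ia ibc, integral_add ib ic, integral_const_mul]
    ring
  have hmixnn : (0:ℝ) ≤ ∫ p : P2, pdx (pdx ξ) p * pdy (pdy ξ) p := by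
    rw [← hkey]; exact nn _
  have hgradgE : (∫ p : P2, gradSq (pdx ξ) p) ≤ E^2 := by
    rw [gradSplit _ hg h2g, hE2, lapExpand, comm1, hkey]
    linarith [nn (pdy (pdy ξ)), hmixnn]
  have Lf := lady hf h2f
  have Lg := lady hg h2g
  have hKc : (0:ℝ) ≤ 8 * K0 := by nlinarith [K0_nonneg]
  have hF4 : (∫ p : P2, (pdy Ψ p)^4) ≤ (8*K0) * (A^2 * A^2) :=
    Lf.trans (mul_le_mul_of_nonneg_left
      (mul_le_mul hfA hgradfA (gsnn _) (sq_nonneg A)) hKc)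
  have hG4 : (∫ p : P2, (pdx ξ p)^4) ≤ (8*K0) * (B^2 * E^2) :=
    Lg.trans (mul_le_mul_of_nonneg_left
      (mul_le_mul hgB hgradgE (gsnn _) (sq_nonneg B)) hKc)
  have CS1 : (∫ p : P2, pdy Ψ p * pdx ξ p * lap ξ p)^2
      ≤ (∫ p : P2, (pdy Ψ p * pdx ξ p)^2) * (∫ p : P2, (lap ξ p)^2) :=
    myCS (hf.continuous.mul hg.continuous) (h2f.mul_right) hh.continuous h2h
  have CS2' := myCS (f := fun p => (pdy Ψ p)^2) (g := fun p => (pdx ξ p)^2)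
    (hf.continuous.pow 2) (h2f.comp_left (g := fun t : ℝ => t^2) (by simp))
    (hg.continuous.pow 2) (h2g.comp_left (g := fun t : ℝ => t^2) (by simp))
  have e2 : (∫ p : P2, ((pdy Ψ p)^2)^2) = ∫ p : P2, (pdy Ψ p)^4 := by
    congr 1; funext p; ring
  have e3 : (∫ p : P2, ((pdx ξ p)^2)^2) = ∫ p : P2, (pdx ξ p)^4 := by
    congr 1; funext p; ring
  rw [e2, e3] at CS2'
  have CS2 : (∫ p : P2, (pdy Ψ p * pdx ξ p)^2)^2
      ≤ (∫ p : P2, (pdy Ψ p)^4) * (∫ p : P2, (pdx ξ p)^4) := by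
    have e1 : (∫ p : P2, (pdy Ψ p * pdx ξ p)^2)
        = ∫ p : P2, (pdy Ψ p)^2 * (pdx ξ p)^2 := by
      congr 1; funext p; ring
    rw [e1]; exact CS2'
  set X := ∫ p : P2, pdy Ψ p * pdx ξ p * lap ξ p with hX_def
  have nnF4 : (0:ℝ) ≤ ∫ p : P2, (pdy Ψ p)^4 := integral_nonneg fun p => by positivity
  have nnG4 : (0:ℝ) ≤ ∫ p : P2, (pdx ξ p)^4 := integral_nonneg fun p => by positivity
  have X4 : X^4 ≤ ((8*K0)*(A^2*A^2)) * ((8*K0)*(B^2*E^2)) * (E^2)^2 := by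
    calc X^4 = (X^2)^2 := by ring
      _ ≤ ((∫ p : P2, (pdy Ψ p * pdx ξ p)^2) * (∫ p : P2, (lap ξ p)^2))^2 :=
          pow_le_pow_left₀ (sq_nonneg X) CS1 2
      _ = (∫ p : P2, (pdy Ψ p * pdx ξ p)^2)^2 * (∫ p : P2, (lap ξ p)^2)^2 := by ring
      _ ≤ ((∫ p : P2, (pdy Ψ p)^4) * (∫ p : P2, (pdx ξ p)^4))
            * (∫ p : P2, (lap ξ p)^2)^2 :=
          mul_le_mul_of_nonneg_right CS2 (sq_nonneg _)
      _ ≤ (((8*K0)*(A^2*A^2)) * ((8*K0)*(B^2*E^2))) * (∫ p : P2, (lap ξ p)^2)^2 :=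
          mul_le_mul_of_nonneg_right
            (mul_le_mul hF4 hG4 nnG4 (mul_nonneg hKc (by positivity))) (sq_nonneg _)
      _ = ((8*K0)*(A^2*A^2)) * ((8*K0)*(B^2*E^2)) * (E^2)^2 := by rw [← hE2]
  have hD0 : (0:ℝ) ≤ B + E := add_nonneg hB0 hE0
  have hED : E ≤ B + E := le_add_of_nonneg_left hB0
  have hBr : (0:ℝ) ≤ B ^ ((1:ℝ)/2) := Real.rpow_nonneg hB0 _
  have hDr : (0:ℝ) ≤ (B + E) ^ ((3:ℝ)/2) := Real.rpow_nonneg hD0 _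
  have RHSnn : (0:ℝ) ≤ (8*K0+1) * A * B^((1:ℝ)/2) * (B+E)^((3:ℝ)/2) := by
    have h1 : (0:ℝ) ≤ 8*K0+1 := by linarith [hKc]
    positivity
  refine le_of_pow_le_pow_left₀ (n := 4) (by norm_num) RHSnn ?_
  have habs4 : |X|^4 = X^4 := by
    rw [pow_abs, abs_of_nonneg (by positivity : (0:ℝ) ≤ X^4)]
  rw [habs4]
  have hB4 : (B ^ ((1:ℝ)/2))^(4:ℕ) = B^2 := by
    rw [← Real.rpow_natCast (B ^ ((1:ℝ)/2)) 4, ← Real.rpow_mul hB0,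
      show ((1:ℝ)/2*((4:ℕ):ℝ)) = ((2:ℕ):ℝ) by norm_num, Real.rpow_natCast]
  have hD6 : ((B+E) ^ ((3:ℝ)/2))^(4:ℕ) = (B+E)^6 := by
    rw [← Real.rpow_natCast ((B+E) ^ ((3:ℝ)/2)) 4, ← Real.rpow_mul hD0,
      show ((3:ℝ)/2*((4:ℕ):ℝ)) = ((6:ℕ):ℝ) by norm_num, Real.rpow_natCast]
  have t1 : (8*K0)^2 ≤ (8*K0+1)^4 := by nlinarith [K0_nonneg]
  have t2 : (0:ℝ) ≤ A^4*B^2*E^6 := by positivity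
  have t3 : E^6 ≤ (B+E)^6 := pow_le_pow_left₀ hE0 hED 6
  calc X^4 ≤ ((8*K0)*(A^2*A^2)) * ((8*K0)*(B^2*E^2)) * (E^2)^2 := X4
    _ = (8*K0)^2 * (A^4*B^2*E^6) := by ring
    _ ≤ (8*K0+1)^4 * (A^4*B^2*E^6) := mul_le_mul_of_nonneg_right t1 t2
    _ = ((8*K0+1)^4 * A^4 * B^2) * E^6 := by ring
    _ ≤ ((8*K0+1)^4 * A^4 * B^2) * (B+E)^6 :=
        mul_le_mul_of_nonneg_left t3 (by positivity)
    _ = ((8*K0+1) * A * B^((1:ℝ)/2) * (B+E)^((3:ℝ)/2))^4 := by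
        rw [mul_pow, mul_pow, mul_pow, hB4, hD6]
        try ring
end
end
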